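/- arXiv:1610.03808 — 5 statements merged into one kernel-verified Lean document; each statement's English description precedes it below -/
import Mathlib

section
/- Every nonempty word over a totally ordered finite alphabet can be written uniquely as a concatenation w = v_1 v_2 … v_k where each v_j is a Lyndon word and v_1 ≥ v_2 ≥ … ≥ v_k in lexicographic order (Chen–Fox–Lyndon theorem). -/
/-- A word is Lyndon if it is nonempty and strictly smaller (lexicographically)
than all of its nontrivial rotations. -/
def IsLyndon {α : Type*} [LinearOrder α] (w : List α) : Prop :=
  w ≠ [] ∧ ∀ k : ℕ, 0 < k → k < w.length → w < w.rotate k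

section Aux

variable {α : Type*} [LinearOrder α]

theorem lt_append_right' (s : List α) {t : List α} (ht : t ≠ []) : s < s ++ t := by
  induction s with
  | nil =>
    cases t with
    | nil => exact absurd rfl ht
    | cons a t => exact List.nil_lt_cons a t
  | cons a s ih => exact List.Lex.cons ih

theorem prefix_le' {s t : List α} (h : s <+: t) : s ≤ t := by
  obtain ⟨r, rfl⟩ := h
  rcases eq_or_ne r [] with rfl | hr
  · simp
  · exact le_of_lt (lt_append_right' s hr)

theorem append_lt_append_left_iff' (s : List α) {a b : List α} :
    s ++ a < s ++ b ↔ a < b := by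
  induction s with
  | nil => rfl
  | cons x s ih =>
    constructor
    · intro h
      cases h with
      | cons h => exact ih.mp h
      | rel h => exact absurd h (lt_irrefl x)
    · intro h
      exact List.Lex.cons (ih.mpr h)

theorem append_lt_append' {s t : List α} (h : s < t) (hp : ¬ s <+: t) (a b : List α) :
    s ++ a < t ++ b := by
  induction s generalizing t with
  | nil => exact absurd (List.nil_prefix) hp
  | cons x s ih =>
    cases t with
    | nil => exact absurd h (by intro hc; cases hc)
    | cons y t =>
      cases h with
      | cons h' =>
        refine List.Lex.cons (ih h' ?_ )
        intro hpre
        exact hp (List.cons_prefix_cons.mpr ⟨rfl, hpre⟩)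
      | rel h' => exact List.Lex.rel h'

theorem not_prefix_of_length_lt' {s t : List α} (h : t.length < s.length) : ¬ s <+: t :=
  fun hp => absurd hp.length_le (by omega)

theorem IsLyndon.lt_suffix {w : List α} (hw : IsLyndon w) (p s : List α)
    (hps : w = p ++ s) (hp : p ≠ []) (hs : s ≠ []) : w < s := by
  have hpl : 0 < p.length := List.length_pos_iff.mpr hp
  have hsl : 0 < s.length := List.length_pos_iff.mpr hs
  have hwl : w.length = p.length + s.length := by rw [hps, List.length_append]
  have hk : p.length < w.length := by omega
  have hrot : w.rotate p.length = s ++ p := by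
    rw [List.rotate_eq_drop_append_take hk.le, hps, List.drop_left, List.take_left]
  have h1 : w < s ++ p := by rw [← hrot]; exact hw.2 p.length hpl hk
  rcases lt_trichotomy w s with h | h | h
  · exact h
  · exact absurd (congrArg List.length h) (by omega)
  · by_cases hpre : s <+: w
    · obtain ⟨t, hts⟩ := hpre
      have ht : t ≠ [] := by
        rintro rfl
        rw [List.append_nil] at hts
        exact absurd (congrArg List.length hts) (by omega)
      have htp : t < p := by
        rw [← hts] at h1
        exact (append_lt_append_left_iff' s).mp h1
      have hntp : ¬ t <+: p := by
        intro hpre2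
        have : t = p := hpre2.eq_of_length (by
          have := congrArg List.length hts
          simp [List.length_append] at this
          omega)
        exact absurd htp (this ▸ lt_irrefl p)
      have h3 : t ++ s < p ++ s := append_lt_append' htp hntp s s
      rw [← hps] at h3
      have hrot2 : w.rotate s.length = t ++ s := by
        rw [List.rotate_eq_drop_append_take (by omega), ← hts, List.drop_left, List.take_left]
      have h4 : w < t ++ s := by rw [← hrot2]; exact hw.2 s.length hsl (by omega)
      exact absurd (lt_trans h4 h3) (lt_irrefl w)
    · have := append_lt_append' h hpre p []
      rw [List.append_nil] at this
      exact absurd (lt_trans h1 this) (lt_irrefl w)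

theorem isLyndon_of_lt_suffix {w : List α} (hw : w ≠ [])
    (h : ∀ p s, w = p ++ s → p ≠ [] → s ≠ [] → w < s) : IsLyndon w := by
  refine ⟨hw, fun k hk hk' => ?_⟩
  have hps : w = w.take k ++ w.drop k := (List.take_append_drop k w).symm
  have hp : w.take k ≠ [] := by
    intro hc; have := congrArg List.length hc
    rw [List.length_take] at this; simp only [List.length_nil] at this; omega
  have hs : w.drop k ≠ [] := by
    intro hc; have := congrArg List.length hc
    rw [List.length_drop] at this; simp only [List.length_nil] at this; omega
  have h1 : w < w.drop k := h _ _ hps hp hs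
  have hnp : ¬ w <+: w.drop k := not_prefix_of_length_lt' (by rw [List.length_drop]; omega)
  have := append_lt_append' h1 hnp [] (w.take k)
  rw [List.append_nil] at this
  rwa [List.rotate_eq_drop_append_take hk'.le]

theorem append_lt_right' {u v : List α} (hu : IsLyndon u) (hv : IsLyndon v) (h : u < v) :
    u ++ v < v := by
  by_cases hpre : u <+: v
  · obtain ⟨r, rfl⟩ := hpre
    have hr : r ≠ [] := by rintro rfl; rw [List.append_nil] at h; exact absurd h (lt_irrefl u)
    have h2 : u ++ r < r := hv.lt_suffix u r rfl hu.1 hr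
    exact (append_lt_append_left_iff' u).mpr h2
  · have := append_lt_append' h hpre v []
    rwa [List.append_nil] at this

theorem IsLyndon.append {u v : List α} (hu : IsLyndon u) (hv : IsLyndon v) (h : u < v) :
    IsLyndon (u ++ v) := by
  apply isLyndon_of_lt_suffix (by simp [hu.1])
  intro p s heq hp hs
  rcases List.append_eq_append_iff.mp heq with ⟨p', hp', hv'⟩ | ⟨u', hu', hs'⟩
  · -- p = u ++ p', v = p' ++ s
    rcases eq_or_ne p' [] with rfl | hp'ne
    · rw [List.nil_append] at hv'; subst hv'; exact append_lt_right' hu hv h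
    · have h2 : v < s := hv.lt_suffix p' s hv' hp'ne hs
      exact lt_trans (append_lt_right' hu hv h) h2
  · -- u = p ++ u', s = u' ++ v
    rcases eq_or_ne u' [] with rfl | hu'ne
    · rw [List.nil_append] at hs'; subst hs'; exact append_lt_right' hu hv h
    · have h2 : u < u' := hu.lt_suffix p u' hu' hp hu'ne
      have hnp : ¬ u <+: u' := not_prefix_of_length_lt' (by
        have := congrArg List.length hu'
        simp [List.length_append] at this
        have : p.length ≠ 0 := fun hc => hp (List.length_eq_zero_iff.mp hc)
        omega)
      rw [hs']
      exact append_lt_append' h2 hnp v v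

theorem isLyndon_singleton (a : α) : IsLyndon [a] :=
  ⟨by simp, fun k hk hk' => by simp at hk'; omega⟩

theorem norm_ex : ∀ (n : ℕ) (f : List (List α)), f.length ≤ n → (∀ v ∈ f, IsLyndon v) →
    ∃ g : List (List α), g.flatten = f.flatten ∧ (∀ v ∈ g, IsLyndon v) ∧ g.Chain' (· ≥ ·) ∧
      g.length ≤ f.length ∧ ∀ a f', f = a :: f' → ∃ b g', g = b :: g' ∧ a <+: b := by
  intro n
  induction n with
  | zero =>
    intro f hf _
    have : f = [] := List.length_eq_zero_iff.mp (Nat.le_zero.mp hf)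
    subst this
    exact ⟨[], rfl, by simp, List.isChain_nil, le_refl _, by intro a f' h; cases h⟩
  | succ n ih =>
    intro f hf hly
    match f with
    | [] => exact ⟨[], rfl, by simp, List.isChain_nil, le_refl _, by intro a f' h; cases h⟩
    | a :: rest =>
      have hrest : rest.length ≤ n := by simp at hf; omega
      obtain ⟨g, hg1, hg2, hg3, hg4, hg5⟩ := ih rest hrest
        (fun v hv => hly v (List.mem_cons_of_mem a hv))
      have ha : IsLyndon a := hly a List.mem_cons_self
      cases g with
      | nil =>
        refine ⟨[a], ?_, ?_, List.isChain_singleton a, by simp, ?_⟩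
        · simp only [List.flatten_nil] at hg1; simp only [List.flatten_cons, List.flatten_nil, ← hg1, List.append_nil]
        · intro v hv; simp at hv; subst hv; exact ha
        · intro x f' hx
          injection hx with h1 h2
          subst h1
          exact ⟨a, [], rfl, List.prefix_refl a⟩
      | cons c g' =>
        have hc : IsLyndon c := hg2 c List.mem_cons_self
        by_cases hac : a < c
        · -- merge a and c
          have hm : IsLyndon (a ++ c) := ha.append hc hac
          have hmly : ∀ v ∈ (a ++ c) :: g', IsLyndon v := by
            intro v hv
            rcases List.mem_cons.mp hv with rfl | hv
            · exact hm
            · exact hg2 v (List.mem_cons_of_mem c hv)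
          have hmlen : ((a ++ c) :: g').length ≤ n := by
            have : (c :: g').length ≤ rest.length := hg4
            simp at this ⊢; omega
          obtain ⟨h, hh1, hh2, hh3, hh4, hh5⟩ := ih ((a ++ c) :: g') hmlen hmly
          obtain ⟨b, h', hbh, hpre⟩ := hh5 (a ++ c) g' rfl
          refine ⟨h, ?_, hh2, hh3, ?_, ?_⟩
          · rw [hh1]; simp only [List.flatten_cons] at hg1 ⊢
            rw [List.append_assoc, hg1]
          · have : (c :: g').length ≤ rest.length := hg4
            simp at this hh4 ⊢; omega
          · intro x f' hx
            injection hx with h1 h2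
            subst h1
            exact ⟨b, h', hbh, (List.prefix_append a c).trans hpre⟩
        · -- keep a in front
          push_neg at hac
          refine ⟨a :: c :: g', ?_, ?_, ?_, ?_, ?_⟩
          · simp only [List.flatten_cons] at hg1 ⊢; rw [hg1]
          · intro v hv
            rcases List.mem_cons.mp hv with rfl | hv
            · exact ha
            · exact hg2 v hv
          · exact List.isChain_cons_cons.mpr ⟨hac, hg3⟩
          · have : (c :: g').length ≤ rest.length := hg4
            simp at this ⊢; omega
          · intro x f' hx
            injection hx with h1 h2
            subst h1
            exact ⟨a, c :: g', rfl, List.prefix_refl a⟩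

theorem flatten_map_singleton' (w : List α) : (w.map fun a => [a]).flatten = w := by
  induction w with
  | nil => rfl
  | cons a w ih => simp [ih]

theorem chain_le_head' {v : List α} {rest : List (List α)}
    (hc : List.Chain' (· ≥ ·) (v :: rest)) : ∀ x ∈ rest, x ≤ v := by
  have hp : List.Pairwise (· ≥ ·) (v :: rest) := List.isChain_iff_pairwise.mp hc
  exact fun x hx => (List.pairwise_cons.mp hp).1 x hx

theorem flatten_ne_nil' {f : List (List α)} (h : ∀ x ∈ f, IsLyndon x) (hf : f ≠ []) :
    f.flatten ≠ [] := by
  intro hc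
  rw [List.flatten_eq_nil_iff] at hc
  cases f with
  | nil => exact hf rfl
  | cons x t => exact (h x List.mem_cons_self).1 (hc x List.mem_cons_self)

theorem prefix_flatten_decomp : ∀ (f : List (List α)) (u : List α), u <+: f.flatten →
    (∃ f1 f2, f = f1 ++ f2 ∧ u = f1.flatten) ∨
      ∃ f1 v f2 p q, f = f1 ++ v :: f2 ∧ v = p ++ q ∧ p ≠ [] ∧ q ≠ [] ∧
        u = f1.flatten ++ p := by
  intro f
  induction f with
  | nil =>
    intro u hu
    left
    refine ⟨[], [], rfl, ?_⟩
    simpa using List.prefix_nil.mp (by simpa using hu)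
  | cons v f ih =>
    intro u hu
    rw [List.flatten_cons] at hu
    by_cases hlen : u.length ≤ v.length
    · have hpv : u <+: v := List.prefix_of_prefix_length_le hu (List.prefix_append v f.flatten) hlen
      rcases eq_or_ne u v with rfl | hne
      · left; exact ⟨[u], f, rfl, by simp⟩
      · rcases eq_or_ne u [] with rfl | hu0
        · left; exact ⟨[], v :: f, rfl, rfl⟩
        · obtain ⟨q, hq⟩ := hpv
          right
          refine ⟨[], v, f, u, q, rfl, hq.symm, hu0, ?_, by simp⟩
          rintro rfl
          rw [List.append_nil] at hq
          exact hne hq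
    · push_neg at hlen
      have hvu : v <+: u :=
        List.prefix_of_prefix_length_le (List.prefix_append v f.flatten) hu hlen.le
      obtain ⟨u', rfl⟩ := hvu
      have hu' : u' <+: f.flatten := (List.prefix_append_right_inj v).mp hu
      rcases ih u' hu' with ⟨f1, f2, rfl, rfl⟩ | ⟨f1, x, f2, p, q, rfl, hx, hp, hq, rfl⟩
      · left; exact ⟨v :: f1, f2, rfl, by simp⟩
      · right; exact ⟨v :: f1, x, f2, p, q, rfl, hx, hp, hq, by simp⟩

theorem lyndon_prefix_length_le {v : List α} {rest : List (List α)}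
    (hly : ∀ x ∈ v :: rest, IsLyndon x) (hc : List.Chain' (· ≥ ·) (v :: rest))
    {u : List α} (hu : IsLyndon u) (hpre : u <+: (v :: rest).flatten) :
    u.length ≤ v.length := by
  by_contra hlen
  push_neg at hlen
  have hxv : ∀ x ∈ v :: rest, x ≤ v := by
    intro x hx
    rcases List.mem_cons.mp hx with rfl | hx
    · exact le_refl x
    · exact chain_le_head' hc x hx
  have hvpre : v <+: (v :: rest).flatten := by
    rw [List.flatten_cons]; exact List.prefix_append v rest.flatten
  have hvu : v <+: u := List.prefix_of_prefix_length_le hvpre hpre hlen.le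
  have hvleu : v ≤ u := prefix_le' hvu
  rcases prefix_flatten_decomp _ u hpre with ⟨f1, f2, hf, hufl⟩ |
    ⟨f1, x, f2, p, q, hf, hx, hp, hq, hufl⟩
  · have hf1ne : f1 ≠ [] := by
      rintro rfl
      exact hu.1 (by simpa using hufl)
    obtain ⟨f1', vj, rfl⟩ := (List.eq_nil_or_concat' f1).resolve_left hf1ne
    have hvj_mem : vj ∈ v :: rest := by rw [hf]; simp
    have hvjly := hly vj hvj_mem
    rcases eq_or_ne f1' [] with rfl | hne
    · have huvj : u = vj := by simpa using hufl
      have hvvj : v = vj := by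
        simp only [List.nil_append] at hf
        cases hf; rfl
      rw [huvj, ← hvvj] at hlen
      omega
    · have hmem1 : ∀ y ∈ f1', y ∈ v :: rest := by
        intro y hy; rw [hf]; simp [hy]
      have hfl : f1'.flatten ≠ [] :=
        flatten_ne_nil' (fun y hy => hly y (hmem1 y hy)) hne
      have husplit : u = f1'.flatten ++ vj := by rw [hufl]; simp
      have h1 : u < vj := hu.lt_suffix f1'.flatten vj husplit hfl hvjly.1
      have h2 : vj ≤ v := hxv vj hvj_mem
      exact absurd (lt_of_lt_of_le h1 (le_trans h2 hvleu)) (lt_irrefl u)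
  · rcases eq_or_ne f1 [] with rfl | hne
    · have hup : u = p := by simpa using hufl
      have hvx : v = x := by
        simp only [List.nil_append] at hf
        cases hf; rfl
      have : u.length < v.length := by
        rw [hup, hvx, hx, List.length_append]
        have : 0 < q.length := List.length_pos_iff.mpr hq
        omega
      omega
    · have hmem1 : ∀ y ∈ f1, y ∈ v :: rest := by
        intro y hy; rw [hf]; simp [hy]
      have hfl : f1.flatten ≠ [] :=
        flatten_ne_nil' (fun y hy => hly y (hmem1 y hy)) hne
      have h1 : u < p := hu.lt_suffix f1.flatten p hufl hfl hp
      have h2 : p < x := by rw [hx]; exact lt_append_right' p hq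
      have h3 : x ≤ v := hxv x (by rw [hf]; simp)
      exact absurd (lt_trans h1 (lt_of_lt_of_le h2 (le_trans h3 hvleu))) (lt_irrefl u)

theorem fact_unique : ∀ (f g : List (List α)), (∀ x ∈ f, IsLyndon x) →
    List.Chain' (· ≥ ·) f → (∀ x ∈ g, IsLyndon x) → List.Chain' (· ≥ ·) g →
    f.flatten = g.flatten → f = g := by
  intro f
  induction f with
  | nil =>
    intro g _ _ hg _ hfl
    cases g with
    | nil => rfl
    | cons x t =>
      exfalso
      exact flatten_ne_nil' hg (by simp) hfl.symm
  | cons v fr ih =>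
    intro g hf hcf hg hcg hfl
    cases g with
    | nil =>
      exfalso
      exact flatten_ne_nil' hf (by simp) hfl
    | cons v' gr =>
      have hvpre : v <+: (v :: fr).flatten := by
        rw [List.flatten_cons]; exact List.prefix_append _ _
      have hv'pre : v' <+: (v :: fr).flatten := by
        rw [hfl, List.flatten_cons]; exact List.prefix_append _ _
      have h1 : v.length ≤ v'.length :=
        lyndon_prefix_length_le hg hcg (hf v List.mem_cons_self) (by rw [← hfl]; exact hvpre)
      have h2 : v'.length ≤ v.length :=
        lyndon_prefix_length_le hf hcf (hg v' List.mem_cons_self) hv'pre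
      have hvv : v' = v :=
        (List.prefix_of_prefix_length_le hv'pre hvpre h2).eq_of_length (by omega)
      subst hvv
      have htl : fr.flatten = gr.flatten := by
        simp only [List.flatten_cons] at hfl
        exact List.append_cancel_left hfl
      have := ih gr (fun x hx => hf x (List.mem_cons_of_mem v' hx)) hcf.tail
        (fun x hx => hg x (List.mem_cons_of_mem v' hx)) hcg.tail htl
      rw [this]

end Aux

/-- Chen–Fox–Lyndon theorem: every nonempty word factors uniquely as a
concatenation of a non-increasing sequence of Lyndon words. -/
theorem chen_fox_lyndon {α : Type*} [LinearOrder α] [Fintype α] (w : List α) (hw : w ≠ []) :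
    ∃! f : List (List α),
      f.flatten = w ∧ (∀ v ∈ f, IsLyndon v) ∧ f.Chain' (· ≥ ·) := by

  obtain ⟨g, hg1, hg2, hg3, -, -⟩ := norm_ex (w.map fun a => [a]).length (w.map fun a => [a])
    (le_refl _) (fun v hv => by
      obtain ⟨a, -, rfl⟩ := List.mem_map.mp hv
      exact isLyndon_singleton a)
  rw [flatten_map_singleton' w] at hg1
  refine ⟨g, ⟨hg1, hg2, hg3⟩, ?_⟩
  rintro y ⟨hy1, hy2, hy3⟩
  exact fact_unique y g hy2 hy3 hg2 hg3 (by rw [hy1, hg1])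
end

section
/- Let Str_q(n) denote the number of words of length n over an alphabet of q letters whose Chen–Fox–Lyndon factorization is strictly decreasing. Then for all n ≥ 2, Str_q(n) = (q−1)·q^{n−1}. -/
/-- A word has a strictly decreasing Chen–Fox–Lyndon factorization if it is the
concatenation of a strictly decreasing sequence of Lyndon words. -/
def HasStrictDecomp {α : Type*} [LinearOrder α] (w : List α) : Prop :=
  ∃ f : List (List α), f.flatten = w ∧ (∀ v ∈ f, IsLyndon v) ∧ f.Chain' (· > ·)

/-- `Str q n` counts the words of length `n` over a `q`-letter alphabet whose
Chen–Fox–Lyndon factorization is strictly decreasing. -/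
noncomputable def Str (q n : ℕ) : ℕ :=
  Nat.card {w : List (Fin q) // w.length = n ∧ HasStrictDecomp w}

set_option linter.unusedSectionVars false
set_option linter.unusedVariables false

namespace StrAux
open List
variable {α : Type*} [LinearOrder α]

theorem lex_append_left_iff (u : List α) {x y : List α} :
    u ++ x < u ++ y ↔ x < y := by
  induction u with
  | nil => rfl
  | cons a u ih =>
    show List.Lex _ (a :: (u ++ x)) (a :: (u ++ y)) ↔ _
    rw [List.lex_cons_iff]; exact ih

theorem le_append (u t : List α) : u ≤ u ++ t := by
  rcases eq_or_ne t [] with rfl | ht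
  · simp
  · apply le_of_lt
    show List.Lex _ u (u ++ t)
    induction u with
    | nil => cases t with
      | nil => exact absurd rfl ht
      | cons b bs => exact List.Lex.nil
    | cons a u ih => exact List.Lex.cons ih

theorem prefix_le {u v : List α} (h : u <+: v) : u ≤ v := by
  obtain ⟨t, rfl⟩ := h; exact le_append u t

theorem lt_append_of_lt_not_prefix {u v : List α} (h : u < v) (hp : ¬ u <+: v)
    (x y : List α) : u ++ x < v ++ y := by
  induction h with
  | nil => exact absurd (List.nil_prefix) hp
  | @cons a l₁ l₂ h ih =>
    exact List.Lex.cons (ih (by simpa [List.cons_prefix_cons] using hp))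
  | @rel a₁ l₁ a₂ l₂ h => exact List.Lex.rel h

omit [LinearOrder α] in
theorem rotate_append_eq (a b : List α) : (a ++ b).rotate a.length = b ++ a := by
  rw [List.rotate_eq_drop_append_take (by simp)]
  simp

theorem lyndon_lt_suffix {w u v : List α} (hw : IsLyndon w) (h : w = u ++ v)
    (hu : u ≠ []) (hv : v ≠ []) : w < v := by
  subst h
  have hul : 0 < u.length := List.length_pos_iff.mpr hu
  have hvl : 0 < v.length := List.length_pos_iff.mpr hv
  have hlen : (u ++ v).length = u.length + v.length := by simp
  have hrot : u ++ v < v ++ u := by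
    have := hw.2 u.length hul (by omega)
    rwa [rotate_append_eq] at this
  by_contra hlt
  push_neg at hlt  -- v ≤ w
  rcases hlt.lt_or_eq with hvw | hvw
  · -- v < w
    by_cases hpre : v <+: u ++ v
    · -- border case
      obtain ⟨t, hwt⟩ := hpre
      have ht : t ≠ [] := by
        intro h0; rw [h0, List.append_nil] at hwt
        rw [← hwt] at hlen; omega
      have htu : t < u := by
        rw [← lex_append_left_iff v]
        rw [hwt]; exact hrot
      have hrot2 : u ++ v < t ++ v := by
        have := hw.2 v.length hvl (by omega)
        rw [← hwt, rotate_append_eq] at this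
        rwa [← hwt]
      have htl : t.length = u.length := by
        have := congrArg List.length hwt
        simp at this; omega
      have hnp : ¬ t <+: u := by
        intro hp
        have := hp.eq_of_length htl
        exact absurd this (ne_of_lt htu)
      exact lt_asymm hrot2 (lt_append_of_lt_not_prefix htu hnp v v)
    · have := lt_append_of_lt_not_prefix hvw hpre u []
      rw [List.append_nil] at this
      exact lt_asymm hrot this
  · -- v = u ++ v impossible by lengths
    have := congrArg List.length hvw
    omega

theorem isLyndon_of_lt_suffix {w : List α} (hne : w ≠ [])
    (h : ∀ u v, w = u ++ v → u ≠ [] → v ≠ [] → w < v) : IsLyndon w := by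
  refine ⟨hne, fun k hk hkw => ?_⟩
  rw [List.rotate_eq_drop_append_take (le_of_lt hkw)]
  have hd : w = w.take k ++ w.drop k := (List.take_append_drop k w).symm
  have h1 : w.take k ≠ [] := by
    intro h0; have := congrArg List.length h0
    rw [List.length_take] at this; simp only [List.length_nil] at this; omega
  have h2 : w.drop k ≠ [] := by
    intro h0; have := congrArg List.length h0
    rw [List.length_drop] at this; simp only [List.length_nil] at this; omega
  exact lt_of_lt_of_le (h _ _ hd h1 h2) (le_append _ _)

theorem isLyndon_singleton (a : α) : IsLyndon [a] :=
  ⟨by simp, by intro k hk hkw; simp at hkw; omega⟩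

theorem isLyndon_append {u v : List α} (hu : IsLyndon u) (hv : IsLyndon v)
    (huv : u < v) : IsLyndon (u ++ v) := by
  have hune := hu.1
  have hvne := hv.1
  have key : u ++ v < v := by
    by_cases hpre : u <+: v
    · obtain ⟨z, hz⟩ := hpre
      have hzne : z ≠ [] := by
        rintro rfl; rw [List.append_nil] at hz; exact huv.ne hz
      have hvz : v < z := lyndon_lt_suffix hv hz.symm hune hzne
      calc u ++ v < u ++ z := (lex_append_left_iff u).mpr hvz
        _ = v := hz
    · have := lt_append_of_lt_not_prefix huv hpre v []
      rwa [List.append_nil] at this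
  apply isLyndon_of_lt_suffix (by simp [hune])
  intro x s hxs hx hs
  rcases List.append_eq_append_iff.mp hxs.symm with ⟨a', ha1, ha2⟩ | ⟨c', hc1, hc2⟩
  ·
    -- hxs.symm : x ++ s = u ++ v ; append_eq_append_iff: x ++ s = u ++ v ↔
    --   (∃ a', u = x ++ a' ∧ s = a' ++ v) ∨ ∃ c', x = u ++ c' ∧ v = c' ++ s
    rcases eq_or_ne a' [] with rfl | ha
    · rw [List.append_nil] at ha1
      rw [List.nil_append] at ha2
      rw [ha2]; exact key
    · -- u = x ++ a', s = a' ++ v, u < a'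
      have hua : u < a' := lyndon_lt_suffix hu ha1 hx ha
      have hnp : ¬ u <+: a' := by
        intro hp
        have h1 := hp.length_le
        have h2 := congrArg List.length ha1
        simp at h2
        have : x.length = 0 := by omega
        exact hx (List.length_eq_zero_iff.mp this)
      rw [ha2]
      exact lt_append_of_lt_not_prefix hua hnp v v
  · -- x = u ++ c', v = c' ++ s
    rcases eq_or_ne c' [] with rfl | hc
    · rw [List.nil_append] at hc2
      rw [← hc2]; exact key
    · have : v < s := lyndon_lt_suffix hv hc2 hc hs
      exact lt_trans key this


theorem lyndon_ne {w : List α} (h : IsLyndon w) : w ≠ [] := h.1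
def IsCFL (f : List (List α)) : Prop := (∀ v ∈ f, IsLyndon v) ∧ f.Chain' (· ≥ ·)

theorem exists_insert : ∀ (g : List (List α)), IsCFL g → ∀ u, IsLyndon u →
    ∃ h, IsCFL h ∧ h.flatten = u ++ g.flatten := by
  intro g
  induction g with
  | nil => intro _ u hu; exact ⟨[u], ⟨by simpa using hu, List.isChain_singleton _⟩, by simp⟩
  | cons v g' ih =>
    intro hg u hu
    have hv : IsLyndon v := hg.1 v (by simp)
    have hg' : IsCFL g' := ⟨fun x hx => hg.1 x (by simp [hx]), hg.2.tail⟩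
    rcases le_or_gt v u with hle | hlt
    · refine ⟨u :: v :: g', ⟨?_, ?_⟩, by simp⟩
      · intro x hx
        rcases List.mem_cons.mp hx with rfl | hx
        · exact hu
        · exact hg.1 x hx
      · exact List.isChain_cons_cons.mpr ⟨hle, hg.2⟩
    · obtain ⟨h, hh, hfl⟩ := ih hg' (u ++ v) (isLyndon_append hu hv hlt)
      exact ⟨h, hh, by simp [hfl]⟩

theorem exists_isCFL (w : List α) : ∃ f, IsCFL f ∧ f.flatten = w := by
  induction w with
  | nil => exact ⟨[], ⟨by simp, List.isChain_nil⟩, by simp⟩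
  | cons a t ih =>
    obtain ⟨g, hg, hfl⟩ := ih
    obtain ⟨h, hh, hfl'⟩ := exists_insert g hg [a] (isLyndon_singleton a)
    exact ⟨h, hh, by simp [hfl', hfl]⟩

theorem suffix_append_cases {s a b : List α} (h : s <:+ a ++ b) :
    s <:+ b ∨ ∃ t, t <:+ a ∧ t ≠ [] ∧ s = t ++ b := by
  obtain ⟨c, hc⟩ := h
  rcases List.append_eq_append_iff.mp hc with ⟨a', h1, h2⟩ | ⟨c', h1, h2⟩
  · rcases eq_or_ne a' [] with rfl | ha
    · left; rw [List.nil_append] at h2; exact h2 ▸ List.suffix_refl b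
    · right; exact ⟨a', ⟨c, h1.symm⟩, ha, h2⟩
  · left; exact ⟨c', h2.symm⟩

theorem last_le_suffix : ∀ (f : List (List α)) (hc : IsCFL f) (hne : f ≠ [])
    (s : List α), s <:+ f.flatten → s ≠ [] → f.getLast hne ≤ s := by
  intro f
  induction f with
  | nil => intro _ h; exact absurd rfl h
  | cons l f' ih =>
    intro hc hne s hs hsne
    have hl : IsLyndon l := hc.1 l (by simp)
    rcases eq_or_ne f' [] with rfl | hf'
    · simp only [List.flatten_cons, List.flatten_nil, List.append_nil] at hs
      obtain ⟨c, hcs⟩ := hs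
      rcases eq_or_ne c [] with rfl | hcne
      · simp only [List.nil_append] at hcs
        simp [List.getLast, hcs]
      · have := lyndon_lt_suffix hl hcs.symm hcne hsne
        simpa [List.getLast] using le_of_lt this
    · have hgl : (l :: f').getLast hne = f'.getLast hf' := List.getLast_cons hf'
      have hcf' : IsCFL f' := ⟨fun x hx => hc.1 x (by simp [hx]), hc.2.tail⟩
      have hlast_le_l : f'.getLast hf' ≤ l := by
        have hp : List.Pairwise (· ≥ ·) (l :: f') := List.isChain_iff_pairwise.mp hc.2
        exact (List.pairwise_cons.mp hp).1 _ (List.getLast_mem hf')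
      rw [List.flatten_cons] at hs
      rcases suffix_append_cases hs with h | ⟨t, ht, htne, rfl⟩
      · rw [hgl]; exact ih hcf' hf' s h hsne
      · rw [hgl]
        rcases eq_or_ne t l with rfl | htl
        · exact le_trans hlast_le_l (le_append _ _)
        · obtain ⟨c, hcl⟩ := ht
          have hcne : c ≠ [] := by rintro rfl; exact htl (by simpa using hcl)
          have : l < t := lyndon_lt_suffix hl hcl.symm hcne htne
          exact le_trans (le_trans hlast_le_l (le_of_lt this)) (le_append _ _)

theorem eq_nil_of_flatten_nil {g : List (List α)} (hg : IsCFL g)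
    (h : g.flatten = []) : g = [] := by
  cases g with
  | nil => rfl
  | cons l g' =>
    rw [List.flatten_cons, List.append_eq_nil_iff] at h
    exact absurd h.1 (lyndon_ne (hg.1 l (by simp)))

theorem isCFL_unique : ∀ (n : ℕ) (f g : List (List α)), f.flatten.length ≤ n →
    IsCFL f → IsCFL g → f.flatten = g.flatten → f = g := by
  intro n
  induction n with
  | zero =>
    intro f g hlen hf hg hfg
    have hfnil : f.flatten = [] := List.length_eq_zero_iff.mp (Nat.le_zero.mp hlen)
    rw [eq_nil_of_flatten_nil hf hfnil, eq_nil_of_flatten_nil hg (hfg ▸ hfnil)]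
  | succ n ih =>
    intro f g hlen hf hg hfg
    rcases eq_or_ne f.flatten [] with hfnil | hfne
    · rw [eq_nil_of_flatten_nil hf hfnil, eq_nil_of_flatten_nil hg (hfg ▸ hfnil)]
    · have hfne' : f ≠ [] := by rintro rfl; simp at hfne
      have hgne' : g ≠ [] := by
        rintro rfl; rw [show (List.flatten ([] : List (List α))) = [] from rfl] at hfg
        exact hfne hfg
      obtain ⟨f', l, rfl⟩ := f.eq_nil_or_concat.resolve_left hfne'
      obtain ⟨g', m, rfl⟩ := g.eq_nil_or_concat.resolve_left hgne'
      simp only [List.concat_eq_append] at *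
      have hlne : l ≠ [] := lyndon_ne (hf.1 l (by simp))
      have hmne : m ≠ [] := lyndon_ne (hg.1 m (by simp))
      have hflf : (f' ++ [l]).flatten = f'.flatten ++ l := List.flatten_concat (L := f') (l := l)
      have hflg : (g' ++ [m]).flatten = g'.flatten ++ m := List.flatten_concat (L := g') (l := m)
      have hlm : l = m := by
        have h1 : (g' ++ [m]).getLast (by simp) ≤ l := by
          apply last_le_suffix _ hg (by simp) l _ hlne
          rw [← hfg, hflf]; exact ⟨f'.flatten, rfl⟩
        have h2 : (f' ++ [l]).getLast (by simp) ≤ m := by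
          apply last_le_suffix _ hf (by simp) m _ hmne
          rw [hfg, hflg]; exact ⟨g'.flatten, rfl⟩
        rw [List.getLast_concat] at h1 h2
        exact le_antisymm h2 h1
      subst hlm
      have hff' : f'.flatten = g'.flatten := by
        rw [hflf, hflg] at hfg
        exact List.append_cancel_right hfg
      have hcf' : IsCFL f' := ⟨fun x hx => hf.1 x (by simp [hx]),
        (List.isChain_append.mp hf.2).1⟩
      have hcg' : IsCFL g' := ⟨fun x hx => hg.1 x (by simp [hx]),
        (List.isChain_append.mp hg.2).1⟩
      have hlen' : f'.flatten.length ≤ n := by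
        have := congrArg List.length hflf
        simp only [List.length_append] at this
        have hl1 : 1 ≤ l.length := List.length_pos_iff.mpr hlne
        have : (f' ++ [l]).flatten.length = f'.flatten.length + l.length := this
        omega
      rw [ih f' g' hlen' hcf' hcg' hff']


section
variable {α : Type*} [LinearOrder α]
open List

noncomputable def cfl (w : List α) : List (List α) := (exists_isCFL w).choose

theorem cfl_isCFL (w : List α) : IsCFL (cfl w) := (exists_isCFL w).choose_spec.1
theorem cfl_flatten (w : List α) : (cfl w).flatten = w := (exists_isCFL w).choose_spec.2

theorem cfl_eq {f : List (List α)} (hf : IsCFL f) : cfl f.flatten = f :=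
  isCFL_unique (f.flatten.length) _ _ (le_of_eq (by rw [cfl_flatten]))
    (cfl_isCFL _) hf (cfl_flatten _)

/-- weight of a multiplicity function -/
def wt (g : List α →₀ ℕ) : ℕ := g.sum fun x c => c * x.length

theorem wt_add (a b : List α →₀ ℕ) : wt (a + b) = wt a + wt b :=
  Finsupp.sum_add_index' (fun _ => zero_mul _) (fun _ b₁ b₂ => add_mul b₁ b₂ _)

theorem wt_listToFinsupp (f : List (List α)) :
    wt (Multiset.toFinsupp (↑f : Multiset (List α))) = f.flatten.length := by
  induction f with
  | nil => simp [wt]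
  | cons x f ih =>
    have : (↑(x :: f) : Multiset (List α)) = {x} + ↑f := by
      rw [Multiset.singleton_add]; rfl
    rw [this, Multiset.toFinsupp_add, wt_add, ih]
    have : wt (Multiset.toFinsupp ({x} : Multiset (List α))) = x.length := by
      rw [Multiset.toFinsupp_singleton]
      simp [wt, Finsupp.sum_single_index]
    rw [this]; simp [Nat.add_comm]

/-- the standard word attached to a multiplicity function -/
noncomputable def fromF (g : List α →₀ ℕ) : List α :=
  ((Finsupp.toMultiset g).sort (· ≥ ·)).flatten

noncomputable def toF (w : List α) : List α →₀ ℕ := Multiset.toFinsupp (↑(cfl w))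

theorem sort_coe_eq {f : List (List α)} (hs : List.Pairwise (· ≥ ·) f) :
    (↑f : Multiset (List α)).sort (· ≥ ·) = f :=
  List.Perm.eq_of_pairwise (fun _ _ _ _ h1 h2 => le_antisymm h2 h1)
    (Multiset.pairwise_sort _ _) hs (Multiset.coe_eq_coe.mp (Multiset.sort_eq _ _))

theorem sorted_of_isCFL {f : List (List α)} (hf : IsCFL f) : List.Pairwise (· ≥ ·) f :=
  List.isChain_iff_pairwise.mp hf.2

theorem mem_sortF {g : List α →₀ ℕ} {x : List α} :
    x ∈ (Finsupp.toMultiset g).sort (· ≥ ·) ↔ x ∈ g.support := by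
  rw [Multiset.mem_sort, Finsupp.mem_toMultiset]

theorem isCFL_sortF {g : List α →₀ ℕ} (hg : ∀ x ∈ g.support, IsLyndon x) :
    IsCFL ((Finsupp.toMultiset g).sort (· ≥ ·)) := by
  constructor
  · intro v hv; exact hg v (mem_sortF.mp hv)
  · exact List.isChain_iff_pairwise.mpr (Multiset.pairwise_sort _ _)

theorem cfl_fromF {g : List α →₀ ℕ} (hg : ∀ x ∈ g.support, IsLyndon x) :
    cfl (fromF g) = (Finsupp.toMultiset g).sort (· ≥ ·) :=
  cfl_eq (isCFL_sortF hg)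

theorem toF_fromF {g : List α →₀ ℕ} (hg : ∀ x ∈ g.support, IsLyndon x) :
    toF (fromF g) = g := by
  rw [toF, cfl_fromF hg, Multiset.sort_eq, Finsupp.toMultiset_toFinsupp]

theorem fromF_toF (w : List α) : fromF (toF w) = w := by
  rw [fromF, toF, Multiset.toFinsupp_toMultiset,
    sort_coe_eq (sorted_of_isCFL (cfl_isCFL w)), cfl_flatten]

theorem length_fromF (g : List α →₀ ℕ) : (fromF g).length = wt g := by
  have h := wt_listToFinsupp ((Finsupp.toMultiset g).sort (· ≥ ·))
  rw [Multiset.sort_eq, Finsupp.toMultiset_toFinsupp] at h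
  rw [fromF, h]

theorem wt_toF (w : List α) : wt (toF w) = w.length := by
  rw [toF, wt_listToFinsupp, cfl_flatten]

theorem support_toF_lyndon (w : List α) : ∀ x ∈ (toF w).support, IsLyndon x := by
  intro x hx
  rw [toF, Multiset.toFinsupp_support, Multiset.mem_toFinset, Multiset.mem_coe] at hx
  exact (cfl_isCFL w).1 x hx

theorem strict_count_le_one {w : List α} (h : HasStrictDecomp w) (x : List α) :
    toF w x ≤ 1 := by
  obtain ⟨f, hfl, hly, hch⟩ := h
  have hcfl : IsCFL f := ⟨hly, hch.imp fun a b h => le_of_lt h⟩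
  have hcw : cfl w = f := by rw [← hfl]; exact cfl_eq hcfl
  rw [toF, hcw, Multiset.toFinsupp_apply]
  apply Multiset.nodup_iff_count_le_one.mp _ x
  rw [Multiset.coe_nodup]
  exact ((List.isChain_iff_pairwise.mp hch).imp (fun h => ne_of_gt h))

theorem hasStrictDecomp_fromF {g : List α →₀ ℕ} (hg : ∀ x ∈ g.support, IsLyndon x)
    (h1 : ∀ x, g x ≤ 1) : HasStrictDecomp (fromF g) := by
  refine ⟨(Finsupp.toMultiset g).sort (· ≥ ·), rfl, (isCFL_sortF hg).1, ?_⟩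
  apply List.isChain_iff_pairwise.mpr
  have hnd : ((Finsupp.toMultiset g).sort (· ≥ ·)).Nodup := by
    rw [← Multiset.coe_nodup, Multiset.sort_eq]
    apply Multiset.nodup_iff_count_le_one.mpr
    intro a; rw [Finsupp.count_toMultiset]; exact h1 a
  exact ((Multiset.pairwise_sort _ (· ≥ ·)).and hnd).imp
    (fun ⟨h1, h2⟩ => lt_of_le_of_ne h1 (Ne.symm h2))

end

section Counting
variable {α : Type*} [LinearOrder α]

noncomputable def oddF (g : List α →₀ ℕ) : List α →₀ ℕ := g.mapRange (· % 2) (Nat.zero_mod 2)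
noncomputable def halfF (g : List α →₀ ℕ) : List α →₀ ℕ := g.mapRange (· / 2) (Nat.zero_div 2)

theorem oddF_apply (g : List α →₀ ℕ) (x : List α) : oddF g x = g x % 2 :=
  Finsupp.mapRange_apply

theorem halfF_apply (g : List α →₀ ℕ) (x : List α) : halfF g x = g x / 2 :=
  Finsupp.mapRange_apply

theorem odd_add_half (g : List α →₀ ℕ) : oddF g + (halfF g + halfF g) = g := by
  ext x
  simp only [Finsupp.add_apply, oddF_apply, halfF_apply]
  omega

theorem support_oddF (g : List α →₀ ℕ) : (oddF g).support ⊆ g.support :=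
  Finsupp.support_mapRange

theorem support_halfF (g : List α →₀ ℕ) : (halfF g).support ⊆ g.support :=
  Finsupp.support_mapRange

/-- pairs (strict word, auxiliary word) with weighted total length `m` -/
@[reducible] def Tt (α : Type*) [LinearOrder α] (m : ℕ) : Type _ :=
  {p : List α × List α // HasStrictDecomp p.1 ∧ p.1.length + 2 * p.2.length = m}

noncomputable def phi (m : ℕ) : {w : List α // w.length = m} ≃ Tt α m where
  toFun w := ⟨(fromF (oddF (toF w.1)), fromF (halfF (toF w.1))),
    hasStrictDecomp_fromF (fun x hx => support_toF_lyndon _ x (support_oddF _ hx))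
      (fun x => by rw [oddF_apply]; omega),
    by
      have h := congrArg wt (odd_add_half (toF w.1))
      rw [wt_add, wt_add, wt_toF, w.2] at h
      rw [length_fromF, length_fromF]
      omega⟩
  invFun p := ⟨fromF (toF p.1.1 + (toF p.1.2 + toF p.1.2)), by
    rw [length_fromF, wt_add, wt_add, wt_toF, wt_toF]
    have := p.2.2
    omega⟩
  left_inv w := by
    apply Subtype.ext
    show fromF (toF (fromF (oddF (toF w.1))) + (toF (fromF (halfF (toF w.1))) +
      toF (fromF (halfF (toF w.1))))) = w.1
    rw [toF_fromF (fun x hx => support_toF_lyndon _ x (support_oddF _ hx)),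
        toF_fromF (fun x hx => support_toF_lyndon _ x (support_halfF _ hx)),
        odd_add_half, fromF_toF]
  right_inv p := by
    obtain ⟨⟨u, v⟩, hs, hl⟩ := p
    replace hs : HasStrictDecomp u := hs
    replace hl : u.length + 2 * v.length = m := hl
    have hsupp : ∀ x ∈ (toF u + (toF v + toF v)).support, IsLyndon x := by
      intro x hx
      rcases Finset.mem_union.mp (Finsupp.support_add hx) with h | h
      · exact support_toF_lyndon u x h
      · rcases Finset.mem_union.mp (Finsupp.support_add h) with h2 | h2 <;>
          exact support_toF_lyndon v x h2
    have hT : toF (fromF (toF u + (toF v + toF v))) = toF u + (toF v + toF v) :=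
      toF_fromF hsupp
    apply Subtype.ext
    have ho : oddF (toF u + (toF v + toF v)) = toF u := by
      ext x
      rw [oddF_apply, Finsupp.add_apply, Finsupp.add_apply]
      have := strict_count_le_one hs x
      omega
    have hh : halfF (toF u + (toF v + toF v)) = toF v := by
      ext x
      rw [halfF_apply, Finsupp.add_apply, Finsupp.add_apply]
      have := strict_count_le_one hs x
      omega
    show (fromF (oddF (toF (fromF (toF u + (toF v + toF v))))),
      fromF (halfF (toF (fromF (toF u + (toF v + toF v)))))) = (u, v)
    rw [hT, ho, hh, fromF_toF, fromF_toF]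

end Counting

section Count2
open List

def consEquiv (β : Type*) (m : ℕ) :
    {w : List β // w.length = m + 1} ≃ β × {w : List β // w.length = m} where
  toFun w := (w.1.head (by
      intro hnil
      have := w.2
      rw [hnil] at this
      simp at this),
    ⟨w.1.tail, by simp [List.length_tail, w.2]⟩)
  invFun p := ⟨p.1 :: p.2.1, by simp [p.2.2]⟩
  left_inv w := Subtype.ext (List.cons_head_tail _)
  right_inv p := rfl

theorem card_words (q m : ℕ) : Nat.card {w : List (Fin q) // w.length = m} = q ^ m := by
  induction m with
  | zero =>
    haveI : Unique {w : List (Fin q) // w.length = 0} :=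
      ⟨⟨⟨[], rfl⟩⟩, fun w => Subtype.ext (List.length_eq_zero_iff.mp w.2)⟩
    simp [Nat.card_unique]
  | succ m ih =>
    rw [Nat.card_congr (consEquiv (Fin q) m), Nat.card_prod, ih,
      Nat.card_eq_fintype_card, Fintype.card_fin, pow_succ]
    ring

instance fin_words (q m : ℕ) : Finite {w : List (Fin q) // w.length = m} :=
  (List.finite_length_eq (Fin q) m).to_subtype

noncomputable instance fin_Tt (q m : ℕ) : Finite (Tt (Fin q) m) :=
  Finite.of_equiv _ (phi m)

instance fin_strict (q n : ℕ) :
    Finite {w : List (Fin q) // w.length = n ∧ HasStrictDecomp w} :=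
  Finite.of_injective
    (fun w => (⟨w.1, w.2.1⟩ : {w : List (Fin q) // w.length = n}))
    (by intro a b h; simp only [Subtype.mk.injEq] at h; exact Subtype.ext h)

theorem card_Tt (q m : ℕ) : Nat.card (Tt (Fin q) m) = q ^ m := by
  rw [← Nat.card_congr (phi m : {w : List (Fin q) // w.length = m} ≃ Tt (Fin q) m),
    card_words]

def J (q n : ℕ) (hn : 2 ≤ n) :
    ({w : List (Fin q) // w.length = n ∧ HasStrictDecomp w} ⊕ (Tt (Fin q) (n - 2) × Fin q)) →
      Tt (Fin q) n
  | .inl u => ⟨(u.1, []), u.2.2, by simp [u.2.1]⟩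
  | .inr (p, c) => ⟨(p.1.1, p.1.2 ++ [c]), p.2.1, by
      have := p.2.2
      simp only [List.length_append, List.length_cons, List.length_nil]
      omega⟩

theorem J_bijective (q n : ℕ) (hn : 2 ≤ n) : Function.Bijective (J q n hn) := by
  constructor
  · rintro (⟨u, hu⟩ | ⟨⟨⟨a, b⟩, hp⟩, c⟩) (⟨u', hu'⟩ | ⟨⟨⟨a', b'⟩, hp'⟩, c'⟩) h <;>
      simp only [J, Subtype.mk.injEq, Prod.mk.injEq] at h
    · exact congrArg Sum.inl (Subtype.ext h.1)
    · exact absurd h.2 (by simp)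
    · exact absurd h.2 (by simp)
    · obtain ⟨h1, h2⟩ := h
      rw [← List.concat_eq_append, ← List.concat_eq_append] at h2
      obtain ⟨hb, hc⟩ := List.concat_inj.mp h2
      subst h1; subst hb; subst hc
      rfl
  · rintro ⟨⟨a, b⟩, hs, hl⟩
    rcases b.eq_nil_or_concat with rfl | ⟨L, c, rfl⟩
    · exact ⟨.inl ⟨a, ⟨by simpa using hl, hs⟩⟩, rfl⟩
    · refine ⟨.inr (⟨(a, L), hs, ?_⟩, c), ?_⟩
      · show a.length + 2 * L.length = n - 2
        rw [List.concat_eq_append] at hl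
        simp only [List.length_append, List.length_cons, List.length_nil] at hl
        omega
      · apply Subtype.ext
        simp [J, List.concat_eq_append]

end Count2
end StrAux

theorem str_eq (q n : ℕ) (hq : 1 ≤ q) (hn : 2 ≤ n) :
    Str q n = (q - 1) * q ^ (n - 1) := by
  have hsplit : Nat.card (StrAux.Tt (Fin q) n) =
      Str q n + Nat.card (StrAux.Tt (Fin q) (n - 2)) * q := by
    rw [← Nat.card_eq_of_bijective (StrAux.J q n hn) (StrAux.J_bijective q n hn),
      Nat.card_sum, Nat.card_prod, Nat.card_eq_fintype_card (α := Fin q),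
      Fintype.card_fin, Str]
  rw [StrAux.card_Tt, StrAux.card_Tt] at hsplit
  have e1 : q ^ n = q ^ (n - 1) * q := by
    rw [← pow_succ]; congr 1; omega
  have e2 : q ^ (n - 1) = q ^ (n - 2) * q := by
    rw [← pow_succ]; congr 1; omega
  have e3 : (q - 1) * q ^ (n - 1) + 1 * q ^ (n - 1) = q * q ^ (n - 1) := by
    rw [← add_mul]
    congr 1
    omega
  rw [mul_comm] at e1
  omega
end

section
/- For n ≥ 2, the proportion of words of length n over an alphabet of q letters whose Chen–Fox–Lyndon factorization is strictly decreasing equals (q−1)/q, independent of n. -/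
set_option linter.dupNamespace false

namespace CFL

variable {α : Type*} [LinearOrder α]

/-! ### Lexicographic order helper lemmas -/

theorem lt_def (l m : List α) : l < m ↔ List.Lex (· < ·) l m := Iff.rfl

theorem prefix_lt (l m : List α) (h : l <+: m) (hne : l ≠ m) : l < m := by
  obtain ⟨t, rfl⟩ := h
  rw [lt_def]
  induction l with
  | nil => cases t with
    | nil => simp at hne
    | cons a t => exact List.Lex.nil
  | cons a l ih =>
    exact List.Lex.cons (ih (by simpa using hne))

theorem prefix_le (l m : List α) (h : l <+: m) : l ≤ m := by
  rcases eq_or_ne l m with rfl | hne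
  · exact le_rfl
  · exact (prefix_lt l m h hne).le

theorem append_lt_append (c a b : List α) (h : a < b) : c ++ a < c ++ b :=
  List.Lex.append_left _ h c

theorem lt_of_append_lt_append (c a b : List α) (h : c ++ a < c ++ b) : a < b := by
  induction c with
  | nil => exact h
  | cons x c ih =>
    rw [lt_def] at h
    cases h with
    | cons h => exact ih h
    | rel h => exact absurd h (lt_irrefl x)

theorem lt_append_of_lt_of_not_prefix (a b s t : List α) (h : a < b) (hp : ¬ a <+: b) :
    a ++ s < b ++ t := by
  rw [lt_def] at h ⊢
  induction h with
  | nil => exact absurd (List.nil_prefix) hp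
  | @cons x l₁ l₂ h ih =>
      exact List.Lex.cons (ih (fun hpre => hp (List.cons_prefix_cons.mpr ⟨rfl, hpre⟩)))
  | rel h => exact List.Lex.rel h

theorem not_prefix_of_lt_of_length_le (a b : List α) (h : a < b) (hl : b.length ≤ a.length) :
    ¬ a <+: b := by
  intro hp
  have : a = b := List.IsPrefix.eq_of_length_le hp hl
  subst this; exact lt_irrefl a h

theorem lt_append_of_lt_of_length_le (a b s t : List α) (h : a < b) (hl : b.length ≤ a.length) :
    a ++ s < b ++ t :=
  lt_append_of_lt_of_not_prefix a b s t h (not_prefix_of_lt_of_length_le a b h hl)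

/-! ### Lyndon word lemmas -/

/-- A Lyndon word is smaller than each of its proper nonempty suffixes. -/
theorem lyndon_lt_suffix {w s : List α} (hw : IsLyndon w) (hs : s <:+ w)
    (hne : s ≠ []) (hpr : s ≠ w) : w < s := by
  obtain ⟨p, rfl⟩ := hs
  have hp : p ≠ [] := by rintro rfl; simp at hpr
  have hplen : 0 < p.length := List.length_pos_iff.mpr hp
  have hslen : 0 < s.length := List.length_pos_iff.mpr hne
  have hrot : (p ++ s).rotate p.length = s ++ p := by
    rw [List.rotate_eq_drop_append_take (by simp)]
    simp
  have hlt : p ++ s < s ++ p := by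
    have := hw.2 p.length hplen (by simp [hslen])
    rwa [hrot] at this
  by_contra hns
  have hsle : s ≤ p ++ s := not_lt.mp hns
  rcases lt_or_eq_of_le hsle with hslt | hseq
  · by_cases hpre : s <+: p ++ s
    · obtain ⟨u, hu⟩ := hpre
      have hul : u.length = p.length := by
        have := congrArg List.length hu
        simp only [List.length_append] at this; omega
      have hup : u < p := lt_of_append_lt_append s u p (by rw [hu]; exact hlt)
      have hlt2 : (p ++ s).rotate s.length = u ++ s := by
        conv_lhs => rw [← hu]
        rw [List.rotate_eq_drop_append_take (by simp)]
        simp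
      have h1 : p ++ s < u ++ s := by
        have := hw.2 s.length hslen (by simp [hplen])
        rwa [hlt2] at this
      have h2 : u ++ s < p ++ s := lt_append_of_lt_of_length_le u p s s hup (by omega)
      exact absurd (h1.trans h2) (lt_irrefl _)
    · have : s ++ p < (p ++ s) ++ [] := lt_append_of_lt_of_not_prefix s (p++s) p [] hslt hpre
      rw [List.append_nil] at this
      exact absurd (hlt.trans this) (lt_irrefl _)
  · have := congrArg List.length hseq
    simp only [List.length_append] at this; omega

theorem isLyndon_of_lt_suffix {w : List α} (hne : w ≠ [])
    (h : ∀ s, s <:+ w → s ≠ [] → s ≠ w → w < s) : IsLyndon w := by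
  refine ⟨hne, fun k hk hkw => ?_⟩
  rw [List.rotate_eq_drop_append_take hkw.le]
  have hd : w.drop k <:+ w := List.drop_suffix k w
  have hdne : w.drop k ≠ [] := by
    intro hh
    have := congrArg List.length hh
    simp at this; omega
  have hdnw : w.drop k ≠ w := by
    intro hh
    have := congrArg List.length hh
    simp at this; omega
  have hlt : w < w.drop k := h _ hd hdne hdnw
  have : w ++ [] < w.drop k ++ w.take k :=
    lt_append_of_lt_of_length_le _ _ _ _ hlt (by simp)
  simpa using this

/-- Helper: if u < v are Lyndon then u ++ v < v. -/
theorem append_lt_right {u v : List α} (hu : IsLyndon u) (hv : IsLyndon v) (huv : u < v) :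
    u ++ v < v := by
  by_cases hpre : u <+: v
  · obtain ⟨v', rfl⟩ := hpre
    have hv'ne : v' ≠ [] := by
      rintro rfl
      rw [List.append_nil] at huv
      exact absurd huv (lt_irrefl u)
    have h1 : u ++ v' < v' := lyndon_lt_suffix hv ⟨u, rfl⟩ hv'ne (by
      intro hh; have := congrArg List.length hh
      simp only [List.length_append] at this
      exact hu.1 (List.length_eq_zero_iff.mp (by omega)))
    exact append_lt_append u (u ++ v') v' h1
  · have := lt_append_of_lt_of_not_prefix u v v [] huv hpre
    rwa [List.append_nil] at this

/-- Concatenation of two Lyndon words u < v is Lyndon. -/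
theorem lyndon_append {u v : List α} (hu : IsLyndon u) (hv : IsLyndon v) (huv : u < v) :
    IsLyndon (u ++ v) := by
  have hlt : u ++ v < v := append_lt_right hu hv huv
  apply isLyndon_of_lt_suffix (by simp [hu.1])
  intro s hs hne hnw
  by_cases hsv : s.length ≤ v.length
  · have hsv' : s <:+ v := List.suffix_of_suffix_length_le hs (List.suffix_append u v) hsv
    rcases eq_or_ne s v with rfl | hne2
    · exact hlt
    · exact hlt.trans (lyndon_lt_suffix hv hsv' hne hne2)
  · push_neg at hsv
    have hvs : v <:+ s := List.suffix_of_suffix_length_le (List.suffix_append u v) hs hsv.le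
    obtain ⟨s', rfl⟩ := hvs
    have hs'ne : s' ≠ [] := by rintro rfl; simp at hsv
    obtain ⟨p, hp⟩ := hs
    have hps' : p ++ s' = u := by
      rw [← List.append_assoc] at hp
      exact List.append_inj_left hp (by
        have := congrArg List.length hp
        simp only [List.length_append] at this ⊢; omega)
    have hs'u : s' <:+ u := ⟨p, hps'⟩
    have hs'nu : s' ≠ u := by
      rintro rfl
      exact hnw rfl
    have h1 : u < s' := lyndon_lt_suffix hu hs'u hs'ne hs'nu
    exact lt_append_of_lt_of_length_le u s' v v h1 hs'u.length_le

/-! ### Existence of the CFL factorization -/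

theorem singleton_lyndon (a : α) : IsLyndon [a] :=
  ⟨by simp, fun k hk hkw => by simp at hkw; omega⟩

theorem cons_factor : ∀ (f : List (List α)) (u : List α), IsLyndon u →
    (∀ v ∈ f, IsLyndon v) → f.Chain' (· ≥ ·) →
    ∃ g : List (List α), g.flatten = u ++ f.flatten ∧ (∀ v ∈ g, IsLyndon v) ∧
      g.Chain' (· ≥ ·)
  | [], u, hu, _, _ => ⟨[u], by simp, by simpa using hu, List.isChain_singleton _⟩
  | ℓ :: f', u, hu, hlyn, hch => by
    rcases le_or_gt ℓ u with hle | hlt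
    · exact ⟨u :: ℓ :: f', by simp, by
        intro v hv
        rcases List.mem_cons.mp hv with rfl | hv
        · exact hu
        · exact hlyn _ hv, by
        exact List.IsChain.cons_cons hle hch⟩
    · have hℓ : IsLyndon ℓ := hlyn ℓ (by simp)
      have huℓ : IsLyndon (u ++ ℓ) := lyndon_append hu hℓ hlt
      obtain ⟨g, hg1, hg2, hg3⟩ := cons_factor f' (u ++ ℓ) huℓ
        (fun v hv => hlyn v (List.mem_cons_of_mem _ hv)) (List.IsChain.tail hch)
      exact ⟨g, by rw [hg1]; simp, hg2, hg3⟩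

theorem exists_factorization (w : List α) :
    ∃ f : List (List α), f.flatten = w ∧ (∀ v ∈ f, IsLyndon v) ∧ f.Chain' (· ≥ ·) := by
  induction w with
  | nil => exact ⟨[], by simp, by simp, List.isChain_nil⟩
  | cons a t ih =>
    obtain ⟨f, hf1, hf2, hf3⟩ := ih
    obtain ⟨g, hg1, hg2, hg3⟩ := cons_factor f [a] (singleton_lyndon a) hf2 hf3
    exact ⟨g, by rw [hg1, hf1]; rfl, hg2, hg3⟩

/-! ### Uniqueness of the CFL factorization -/

theorem prefix_decomp : ∀ (g : List (List α)) (x : List α), x <+: g.flatten →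
    ∃ g₁ g₂ p, g = g₁ ++ g₂ ∧ x = g₁.flatten ++ p ∧
      (p = [] ∨ ∃ ℓ g₂', g₂ = ℓ :: g₂' ∧ p <+: ℓ ∧ p ≠ ℓ ∧ p ≠ [])
  | [], x, hx => by
    rw [List.flatten_nil, List.prefix_nil] at hx
    exact ⟨[], [], [], by simp, by simp [hx], Or.inl rfl⟩
  | ℓ :: g', x, hx => by
    rcases le_or_gt x.length ℓ.length with hle | hlt
    · have hxℓ : x <+: ℓ := List.prefix_of_prefix_length_le hx
        (by rw [List.flatten_cons]; exact List.prefix_append ℓ g'.flatten) hle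
      rcases eq_or_ne x ℓ with rfl | hne
      · exact ⟨[x], g', [], by simp, by simp, Or.inl rfl⟩
      · rcases eq_or_ne x [] with rfl | hxe
        · exact ⟨[], ℓ :: g', [], by simp, by simp, Or.inl rfl⟩
        · exact ⟨[], ℓ :: g', x, by simp, by simp, Or.inr ⟨ℓ, g', rfl, hxℓ, hne, hxe⟩⟩
    · have hℓx : ℓ <+: x := List.prefix_of_prefix_length_le
        (by rw [List.flatten_cons]; exact List.prefix_append ℓ g'.flatten) hx hlt.le
      obtain ⟨x', rfl⟩ := hℓx
      have hx' : x' <+: g'.flatten := by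
        obtain ⟨t, ht⟩ := hx
        rw [List.flatten_cons, List.append_assoc] at ht
        exact ⟨t, List.append_cancel_left ht⟩
      obtain ⟨g₁, g₂, p, h1, h2, h3⟩ := prefix_decomp g' x' hx'
      exact ⟨ℓ :: g₁, g₂, p, by rw [h1]; rfl, by rw [List.flatten_cons, h2, List.append_assoc],
        h3⟩

theorem all_le_of_chain {u : List α} {f : List (List α)}
    (h : (u :: f).Chain' (· ≥ ·)) : ∀ v ∈ f, v ≤ u := by
  rw [List.Chain', List.isChain_iff_pairwise] at h
  exact fun v hv => (List.pairwise_cons.mp h).1 v hv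

theorem no_long_first {u v : List α} {f' g' : List (List α)}
    (hu : IsLyndon u) (hf : ∀ w ∈ f', IsLyndon w) (hcf : (u :: f').Chain' (· ≥ ·))
    (hv : IsLyndon v)
    (heq : u ++ f'.flatten = v ++ g'.flatten) (hlen : u.length < v.length) : False := by
  have hvp : v <+: (u :: f').flatten := by
    rw [List.flatten_cons, heq]
    exact List.prefix_append v g'.flatten
  obtain ⟨g₁, g₂, p, h1, h2, h3⟩ := prefix_decomp (u :: f') v hvp
  have hg₁ne : g₁ ≠ [] := by
    rintro rfl
    simp only [List.flatten_nil, List.nil_append] at h2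
    rcases h3 with rfl | ⟨ℓ, g₂', hg₂, hpre, hne, hpe⟩
    · exact hv.1 h2
    · have : ℓ = u := by
        have := congrArg (List.head?) h1
        rw [hg₂] at this
        simpa using this.symm
      subst this
      subst h2
      have := hpre.length_le
      omega
  obtain ⟨g₁'', rfl⟩ : ∃ g₁'', g₁ = u :: g₁'' := by
    cases g₁ with
    | nil => exact absurd rfl hg₁ne
    | cons a g₁'' =>
      have h0 := congrArg (List.head?) h1
      simp only [List.head?_cons, List.head?_append] at h0
      have : u = a := by simpa using h0
      exact ⟨g₁'', by rw [this]⟩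
  have hf'eq : f' = g₁'' ++ g₂ := by
    simpa using congrArg List.tail h1
  have huv : u < v := by
    apply prefix_lt
    · rw [h2, List.flatten_cons, List.append_assoc]
      exact List.prefix_append _ _
    · intro hh
      rw [← hh] at hlen
      omega
  rcases h3 with rfl | ⟨ℓ, g₂', hg₂, hpre, hne, hpe⟩
  · -- v = flatten (u :: g₁'')
    rw [List.append_nil] at h2
    rcases List.eq_nil_or_concat g₁'' with rfl | ⟨s, a, rfl⟩
    · rw [h2] at hlen; simp at hlen
    · have ha : a ∈ f' := by rw [hf'eq]; simp
      have haly : IsLyndon a := hf a ha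
      have hau : a ≤ u := all_le_of_chain hcf a ha
      have hsuf : a <:+ v := by
        refine ⟨u ++ s.flatten, ?_⟩
        rw [h2]
        simp [List.concat_eq_append, List.append_assoc]
      have hva : v < a := lyndon_lt_suffix hv hsuf haly.1 (by
        intro hh
        have h2' := congrArg List.length h2
        rw [hh] at h2'
        simp [List.concat_eq_append] at h2'
        have := List.length_pos_iff.mpr hu.1
        omega)
      exact absurd ((hva.trans_le hau).trans huv) (lt_irrefl v)
  · have hℓf : ℓ ∈ f' := by rw [hf'eq, hg₂]; simp
    have hℓu : ℓ ≤ u := all_le_of_chain hcf ℓ hℓf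
    have hpℓ : p ≤ ℓ := prefix_le p ℓ hpre
    have hsuf : p <:+ v := by rw [h2]; exact ⟨_, rfl⟩
    have hvp' : v < p := lyndon_lt_suffix hv hsuf hpe (by
      intro hh
      have h2' := congrArg List.length h2
      rw [hh] at h2'
      simp only [List.length_append, List.flatten_cons] at h2'
      have : 0 < u.length := List.length_pos_iff.mpr hu.1
      omega)
    exact absurd ((hvp'.trans_le hpℓ).trans_le hℓu |>.trans huv) (lt_irrefl v)

theorem flatten_eq_nil {g : List (List α)} (hg : ∀ v ∈ g, IsLyndon v)
    (h : g.flatten = []) : g = [] := by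
  cases g with
  | nil => rfl
  | cons v g' =>
    rw [List.flatten_cons, List.append_eq_nil_iff] at h
    exact absurd h.1 (hg v (by simp)).1

theorem factorization_unique_aux : ∀ (n : ℕ) (f g : List (List α)),
    f.flatten.length ≤ n →
    (∀ v ∈ f, IsLyndon v) → f.Chain' (· ≥ ·) →
    (∀ v ∈ g, IsLyndon v) → g.Chain' (· ≥ ·) →
    f.flatten = g.flatten → f = g := by
  intro n
  induction n with
  | zero =>
    intro f g hlen hf hcf hg hcg heq
    have hfn : f.flatten = [] := List.length_eq_zero_iff.mp (by omega)
    rw [flatten_eq_nil hf hfn, flatten_eq_nil hg (by rw [← heq]; exact hfn)]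
  | succ n ih =>
    intro f g hlen hf hcf hg hcg heq
    cases f with
    | nil =>
      rw [flatten_eq_nil hg (by rw [← heq]; rfl)]
    | cons u f' =>
      cases g with
      | nil =>
        exact absurd (flatten_eq_nil hf (by rw [heq]; rfl)) (by simp)
      | cons v g' =>
        rw [List.flatten_cons, List.flatten_cons] at heq
        rcases lt_trichotomy u.length v.length with hlt | hle | hgt
        · exact absurd (no_long_first (hf u (by simp))
            (fun w hw => hf w (by simp [hw])) hcf (hg v (by simp)) heq hlt) id
        · have := List.append_inj heq hle
          obtain ⟨rfl, heq'⟩ := this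
          have hune : u ≠ [] := (hf u (by simp)).1
          have : f' = g' := by
            apply ih f' g' ?_ (fun w hw => hf w (by simp [hw])) (List.IsChain.tail hcf)
              (fun w hw => hg w (by simp [hw])) (List.IsChain.tail hcg) heq'
            have : 0 < u.length := List.length_pos_iff.mpr hune
            rw [List.flatten_cons, List.length_append] at hlen
            omega
          rw [this]
        · exact absurd (no_long_first (hg v (by simp))
            (fun w hw => hg w (by simp [hw])) hcg (hf u (by simp)) heq.symm hgt) id

theorem factorization_unique {f g : List (List α)}
    (hf : ∀ v ∈ f, IsLyndon v) (hcf : f.Chain' (· ≥ ·))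
    (hg : ∀ v ∈ g, IsLyndon v) (hcg : g.Chain' (· ≥ ·))
    (heq : f.flatten = g.flatten) : f = g :=
  factorization_unique_aux f.flatten.length f g le_rfl hf hcf hg hcg heq

/-! ### The canonical factorization as a sorted list of a finsupp -/

variable [DecidableEq α]

/-- The sorted (non-increasing) list of Lyndon factors encoded by a finsupp. -/
noncomputable def toListC (c : List α →₀ ℕ) : List (List α) :=
  Multiset.sort (Multiset.toFinsupp.symm c) (· ≥ ·)

theorem toListC_perm (c : List α →₀ ℕ) :
    (↑(toListC c) : Multiset (List α)) = Multiset.toFinsupp.symm c :=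
  Multiset.sort_eq _ _

theorem toListC_sorted (c : List α →₀ ℕ) : (toListC c).Pairwise (· ≥ ·) :=
  Multiset.pairwise_sort _ _

theorem toListC_chain (c : List α →₀ ℕ) : (toListC c).Chain' (· ≥ ·) :=
  List.isChain_iff_pairwise.mpr (toListC_sorted c)

theorem mem_toListC (c : List α →₀ ℕ) (x : List α) :
    x ∈ toListC c ↔ x ∈ c.support := by
  rw [toListC, Multiset.mem_sort, Multiset.toFinsupp_symm_apply, Finsupp.mem_toMultiset]

theorem toListC_injective : Function.Injective (toListC (α := α)) := by
  intro c₁ c₂ h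
  have : (↑(toListC c₁) : Multiset (List α)) = ↑(toListC c₂) := by rw [h]
  rw [toListC_perm, toListC_perm] at this
  exact Multiset.toFinsupp.symm.injective this

/-- If `f` is a sorted list then `toListC` of its associated finsupp is `f` itself. -/
theorem toListC_ofList {f : List (List α)} (hf : f.Pairwise (· ≥ ·)) :
    toListC (Multiset.toFinsupp (↑f)) = f := by
  apply List.Perm.eq_of_pairwise' (toListC_sorted _) hf ?_
  rw [← Multiset.coe_eq_coe, toListC_perm, AddEquiv.symm_apply_apply]

/-- weight of a finsupp of words: total length. -/
noncomputable def wt (c : List α →₀ ℕ) : ℕ :=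
  ((Multiset.toFinsupp.symm c).map List.length).sum

theorem length_flatten_toListC (c : List α →₀ ℕ) :
    (toListC c).flatten.length = wt c := by
  rw [List.length_flatten, wt, ← toListC_perm, Multiset.map_coe, Multiset.sum_coe]

theorem wt_add (a b : List α →₀ ℕ) : wt (a + b) = wt a + wt b := by
  unfold wt
  rw [map_add, Multiset.map_add, Multiset.sum_add]

/-! ### Counting -/

section Count

variable (q n : ℕ)

/-- Finsupps encoding non-increasing Lyndon factorizations of total length `n`. -/
def Nset : Type :=
  {c : List (Fin q) →₀ ℕ // (∀ w ∈ c.support, IsLyndon w) ∧ wt c = n}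

/-- Finsupps encoding strictly decreasing Lyndon factorizations of total length `n`. -/
def Sset : Type :=
  {c : List (Fin q) →₀ ℕ // (∀ w ∈ c.support, IsLyndon w) ∧ (∀ x, c x ≤ 1) ∧ wt c = n}

noncomputable instance : Fintype {w : List (Fin q) // w.length = n} :=
  inferInstanceAs (Fintype (List.Vector (Fin q) n))

theorem card_words : Nat.card {w : List (Fin q) // w.length = n} = q ^ n := by
  rw [Nat.card_eq_fintype_card]
  have : Fintype.card (List.Vector (Fin q) n) = q ^ n := by
    rw [card_vector, Fintype.card_fin]
  exact this

/-- The word associated to a finsupp in `Nset`. -/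
noncomputable def f1 (c : Nset q n) : {w : List (Fin q) // w.length = n} :=
  ⟨(toListC c.1).flatten, by rw [length_flatten_toListC]; exact c.2.2⟩

theorem f1_injective : Function.Injective (f1 q n) := by
  intro c₁ c₂ h
  apply Subtype.ext
  apply toListC_injective
  apply factorization_unique
    (fun v hv => c₁.2.1 v ((mem_toListC _ _).mp hv)) (toListC_chain _)
    (fun v hv => c₂.2.1 v ((mem_toListC _ _).mp hv)) (toListC_chain _)
  exact congrArg Subtype.val h

theorem f1_surjective : Function.Surjective (f1 q n) := by
  rintro ⟨w, hw⟩
  obtain ⟨f, hf1, hf2, hf3⟩ := exists_factorization w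
  have hsorted : f.Pairwise (· ≥ ·) := List.isChain_iff_pairwise.mp hf3
  set c : List (Fin q) →₀ ℕ := Multiset.toFinsupp (↑f) with hc
  have htl : toListC c = f := toListC_ofList hsorted
  have hsup : ∀ v ∈ c.support, IsLyndon v := by
    intro v hv
    apply hf2
    rw [← mem_toListC, htl] at hv
    exact hv
  have hwt : wt c = n := by
    rw [← length_flatten_toListC, htl, hf1, hw]
  refine ⟨⟨c, hsup, hwt⟩, ?_⟩
  apply Subtype.ext
  show (toListC c).flatten = w
  rw [htl, hf1]

theorem card_Nset : Nat.card (Nset q n) = q ^ n := by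
  rw [Nat.card_eq_of_bijective (f1 q n) ⟨f1_injective q n, f1_surjective q n⟩, card_words]

instance : Finite (Nset q n) := Finite.of_injective _ (f1_injective q n)

/-- The word associated to a finsupp in `Sset`. -/
noncomputable def f2 (c : Sset q n) :
    {w : List (Fin q) // w.length = n ∧ HasStrictDecomp w} :=
  ⟨(toListC c.1).flatten, by rw [length_flatten_toListC]; exact c.2.2.2, by
    refine ⟨toListC c.1, rfl, fun v hv => c.2.1 v ((mem_toListC _ _).mp hv), ?_⟩
    rw [List.Chain', List.isChain_iff_pairwise]
    have hnodup : (toListC c.1).Nodup := by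
      rw [← Multiset.coe_nodup, toListC_perm, Multiset.nodup_iff_count_le_one]
      intro a
      have : Multiset.count a (Multiset.toFinsupp.symm c.1) =
          Multiset.toFinsupp (Multiset.toFinsupp.symm c.1) a := by
        rw [Multiset.toFinsupp_apply]
      rw [this, AddEquiv.apply_symm_apply]
      exact c.2.2.1 a
    exact List.Pairwise.imp₂ (fun a b hge hne => lt_of_le_of_ne hge hne.symm)
      (toListC_sorted c.1) hnodup⟩

theorem f2_injective : Function.Injective (f2 q n) := by
  intro c₁ c₂ h
  apply Subtype.ext
  apply toListC_injective
  apply factorization_unique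
    (fun v hv => c₁.2.1 v ((mem_toListC _ _).mp hv)) (toListC_chain _)
    (fun v hv => c₂.2.1 v ((mem_toListC _ _).mp hv)) (toListC_chain _)
  exact congrArg Subtype.val h

theorem f2_surjective : Function.Surjective (f2 q n) := by
  rintro ⟨w, hw, f, hf1, hf2, hf3⟩
  have hpw : f.Pairwise (· > ·) := List.isChain_iff_pairwise.mp hf3
  have hsorted : f.Pairwise (· ≥ ·) := hpw.imp (fun h => le_of_lt h)
  have hnodup : f.Nodup := hpw.imp (fun h => ne_of_gt h)
  set c : List (Fin q) →₀ ℕ := Multiset.toFinsupp (↑f) with hc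
  have htl : toListC c = f := toListC_ofList hsorted
  have hsup : ∀ v ∈ c.support, IsLyndon v := by
    intro v hv
    apply hf2
    rw [← mem_toListC, htl] at hv
    exact hv
  have hcnt : ∀ x, c x ≤ 1 := by
    intro x
    rw [hc, Multiset.toFinsupp_apply]
    exact (Multiset.nodup_iff_count_le_one.mp (Multiset.coe_nodup.mpr hnodup)) x
  have hwt : wt c = n := by
    rw [← length_flatten_toListC, htl, hf1, hw]
  refine ⟨⟨c, hsup, hcnt, hwt⟩, ?_⟩
  apply Subtype.ext
  show (toListC c).flatten = w
  rw [htl, hf1]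

theorem card_Sset : Nat.card (Sset q n) = Str q n := by
  rw [Str, Nat.card_eq_of_bijective (f2 q n) ⟨f2_injective q n, f2_surjective q n⟩]

instance : Finite (Sset q n) := by
  have : Finite {w : List (Fin q) // w.length = n ∧ HasStrictDecomp w} :=
    Finite.of_injective
      (fun w => (⟨w.1, w.2.1⟩ : {w : List (Fin q) // w.length = n}))
      (by
        intro a b h
        apply Subtype.ext
        have := congrArg (Subtype.val (p := fun w : List (Fin q) => w.length = n)) h
        exact this)
  exact Finite.of_injective _ (f2_injective q n)

/-! ### The parity splitting bijection -/

/-- Odd part of a finsupp: multiplicities mod 2. -/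
noncomputable def oddPart (c : List (Fin q) →₀ ℕ) : List (Fin q) →₀ ℕ :=
  Finsupp.mapRange (· % 2) (Nat.zero_mod 2) c

/-- Half part of a finsupp: multiplicities divided by 2. -/
noncomputable def halfPart (c : List (Fin q) →₀ ℕ) : List (Fin q) →₀ ℕ :=
  Finsupp.mapRange (· / 2) (Nat.zero_div 2) c

theorem odd_add_half (c : List (Fin q) →₀ ℕ) :
    oddPart q c + (halfPart q c + halfPart q c) = c := by
  ext x
  simp only [Finsupp.add_apply, oddPart, halfPart, Finsupp.mapRange_apply]
  omega

/-- The subdivision structure. -/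
def Pset : Type :=
  {p : ((List (Fin q) →₀ ℕ) × (List (Fin q) →₀ ℕ)) //
    (∀ w ∈ p.1.support, IsLyndon w) ∧ (∀ x, p.1 x ≤ 1) ∧
    (∀ w ∈ p.2.support, IsLyndon w) ∧ wt p.1 + 2 * wt p.2 = n}

noncomputable def split (c : Nset q n) : Pset q n :=
  ⟨(oddPart q c.1, halfPart q c.1), by
    refine ⟨?_, ?_, ?_, ?_⟩
    · intro w hw
      simp only [oddPart] at hw
      exact c.2.1 w (Finsupp.support_mapRange hw)
    · intro x
      simp only [oddPart, Finsupp.mapRange_apply]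
      omega
    · intro w hw
      simp only [halfPart] at hw
      exact c.2.1 w (Finsupp.support_mapRange hw)
    · have h := congrArg wt (odd_add_half q c.1)
      rw [wt_add, wt_add] at h
      rw [c.2.2] at h
      simp only
      omega⟩

theorem split_bijective : Function.Bijective (split q n) := by
  constructor
  · intro c₁ c₂ h
    apply Subtype.ext
    have h1 : oddPart q c₁.1 = oddPart q c₂.1 := congrArg (fun p => p.1.1) h
    have h2 : halfPart q c₁.1 = halfPart q c₂.1 := congrArg (fun p => p.1.2) h
    rw [← odd_add_half q c₁.1, ← odd_add_half q c₂.1, h1, h2]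
  · rintro ⟨⟨a, b⟩, ha, ha1, hb, hw⟩
    dsimp only at ha ha1 hb hw
    set c : List (Fin q) →₀ ℕ := a + (b + b) with hc
    have hodd : oddPart q c = a := by
      ext x
      simp only [oddPart, Finsupp.mapRange_apply, hc, Finsupp.add_apply]
      have := ha1 x
      omega
    have hhalf : halfPart q c = b := by
      ext x
      simp only [halfPart, Finsupp.mapRange_apply, hc, Finsupp.add_apply]
      have := ha1 x
      omega
    have hsup : ∀ w ∈ c.support, IsLyndon w := by
      intro w hw'
      rcases Finset.mem_union.mp (Finsupp.support_add hw') with h | h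
      · exact ha w h
      · rcases Finset.mem_union.mp (Finsupp.support_add h) with h' | h'
        · exact hb w h'
        · exact hb w h'
    have hwt : wt c = n := by
      rw [hc, wt_add, wt_add]
      omega
    exact ⟨⟨c, hsup, hwt⟩, Subtype.ext (Prod.ext hodd hhalf)⟩

/-- Assembling: the sigma-type decomposition of `Pset`. -/
noncomputable def assemble (x : Σ j : Fin (n / 2 + 1), Sset q (n - 2 * j) × Nset q j) :
    Pset q n :=
  ⟨(x.2.1.1, x.2.2.1), x.2.1.2.1, x.2.1.2.2.1, x.2.2.2.1, by
    have h1 := x.2.1.2.2.2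
    have h2 := x.2.2.2.2
    have h3 := x.1.isLt
    rw [h1, h2]
    omega⟩

theorem assemble_bijective : Function.Bijective (assemble q n) := by
  constructor
  · rintro ⟨j₁, a₁, b₁⟩ ⟨j₂, a₂, b₂⟩ h
    have h1 : a₁.1 = a₂.1 := congrArg (fun p => p.1.1) h
    have h2 : b₁.1 = b₂.1 := congrArg (fun p => p.1.2) h
    obtain rfl : j₁ = j₂ := by
      apply Fin.ext
      have e1 := b₁.2.2
      have e2 := b₂.2.2
      rw [← e1, ← e2, h2]
    rw [show a₁ = a₂ from Subtype.ext h1, show b₁ = b₂ from Subtype.ext h2]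
  · rintro ⟨⟨a, b⟩, ha, ha1, hb, hw⟩
    dsimp only at ha ha1 hb hw
    have hj : wt b < n / 2 + 1 := by omega
    refine ⟨⟨⟨wt b, hj⟩, ⟨a, ha, ha1, by simp only; omega⟩, ⟨b, hb, by simp only⟩⟩, ?_⟩
    apply Subtype.ext
    rfl

/-- The master counting identity. -/
theorem master (m : ℕ) :
    q ^ m = ∑ j ∈ Finset.range (m / 2 + 1), Str q (m - 2 * j) * q ^ j := by
  haveI : ∀ k : ℕ, Fintype (Sset q k) := fun k => Fintype.ofFinite _
  haveI : ∀ k : ℕ, Fintype (Nset q k) := fun k => Fintype.ofFinite _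
  calc q ^ m = Nat.card (Nset q m) := (card_Nset q m).symm
    _ = Nat.card (Pset q m) := Nat.card_eq_of_bijective _ (split_bijective q m)
    _ = Nat.card (Σ j : Fin (m / 2 + 1), Sset q (m - 2 * j) × Nset q j) :=
        (Nat.card_eq_of_bijective _ (assemble_bijective q m)).symm
    _ = ∑ j : Fin (m / 2 + 1), Nat.card (Sset q (m - 2 * j)) * Nat.card (Nset q j) := by
        rw [Nat.card_eq_fintype_card, Fintype.card_sigma]
        congr 1
        funext j
        rw [Fintype.card_prod, Nat.card_eq_fintype_card, Nat.card_eq_fintype_card]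
    _ = ∑ j : Fin (m / 2 + 1), Str q (m - 2 * j) * q ^ (j : ℕ) := by
        congr 1
        funext j
        rw [card_Sset, card_Nset]
    _ = ∑ j ∈ Finset.range (m / 2 + 1), Str q (m - 2 * j) * q ^ j :=
        Fin.sum_univ_eq_sum_range (fun x => Str q (m - 2 * x) * q ^ x) _

end Count

end CFL

/-- The proportion of words of length `n ≥ 2` over a `q`-letter alphabet with
strictly decreasing Lyndon factorization is `(q-1)/q`, independent of `n`. -/
theorem str_proportion (q n : ℕ) (hq : 2 ≤ q) (hn : 2 ≤ n) :
    (Str q n : ℚ) / (q : ℚ) ^ n = ((q : ℚ) - 1) / (q : ℚ) := by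
  obtain ⟨m, rfl⟩ : ∃ m, n = m + 2 := ⟨n - 2, by omega⟩
  have h1 := CFL.master q (m + 2)
  have h2 := CFL.master q m
  have hsplit : (m + 2) / 2 + 1 = (m / 2 + 1) + 1 := by omega
  rw [hsplit, Finset.sum_range_succ'] at h1
  have hterm : ∀ j, Str q (m + 2 - 2 * (j + 1)) * q ^ (j + 1)
      = q * (Str q (m - 2 * j) * q ^ j) := by
    intro j
    have h : m + 2 - 2 * (j + 1) = m - 2 * j := by omega
    rw [h, pow_succ]
    ring
  rw [Finset.sum_congr rfl (fun j _ => hterm j), ← Finset.mul_sum, ← h2] at h1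
  simp only [Nat.mul_zero, Nat.sub_zero, pow_zero, mul_one] at h1
  have hle : q ^ (m + 1) ≤ q ^ (m + 2) := Nat.pow_le_pow_right (by omega) (by omega)
  have hStr : Str q (m + 2) = q ^ (m + 2) - q ^ (m + 1) := by
    have hqq : q * q ^ m = q ^ (m + 1) := by ring
    omega
  have hcast : ((q ^ (m + 2) - q ^ (m + 1) : ℕ) : ℚ) = (q:ℚ)^(m+2) - (q:ℚ)^(m+1) := by
    push_cast [hle]
    ring
  rw [hStr, hcast]
  have hq0 : (q : ℚ) ≠ 0 := by
    have : (0:ℚ) < q := by exact_mod_cast (by omega : 0 < q)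
    exact ne_of_gt this
  field_simp
  ring
end

section
/- As formal power series over the rationals, ∏_{l≥1} (1 + x^l)^{L_q(l)} = (1 − q x^2)/(1 − q x), where L_q(l) is the number of Lyndon words of length l over a q-letter alphabet. -/
/-- `LyndonCount q l` is the number of Lyndon words of length `l` over `q` letters. -/
noncomputable def LyndonCount (q l : ℕ) : ℕ :=
  Nat.card {w : List (Fin q) // w.length = l ∧ IsLyndon w}

set_option linter.unusedSectionVars false
set_option linter.unusedVariables false
set_option linter.deprecated false

open List

namespace LyndonAux

variable {α : Type*}

theorem rotate_period_sub {v : List α} {p k : ℕ} (hp : v.rotate p = v) (hk : v.rotate k = v)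
    (h : p ≤ k) : v.rotate (k - p) = v := by
  have h2 := v.rotate_rotate p (k - p)
  rw [hp, Nat.add_sub_cancel' h] at h2
  rw [h2, hk]

theorem rotate_period_mod {v : List α} {p : ℕ} (hp : v.rotate p = v) :
    ∀ k, v.rotate k = v → v.rotate (k % p) = v := by
  intro k
  induction k using Nat.strong_induction_on with
  | _ k ih =>
    intro hk
    rcases Nat.eq_zero_or_pos p with rfl | hppos
    · simpa using hk
    rcases lt_or_ge k p with h | h
    · rwa [Nat.mod_eq_of_lt h]
    · have h1 : v.rotate (k - p) = v := rotate_period_sub hp hk h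
      have h2 := ih (k - p) (by omega) h1
      rwa [Nat.mod_eq_sub_mod h]

theorem length_flatten_replicate (e : ℕ) (u : List α) :
    ((List.replicate e u).flatten).length = e * u.length := by
  induction e with
  | zero => simp
  | succ e ih => simp [List.replicate_succ, ih, Nat.succ_mul, Nat.add_comm]

theorem flatten_replicate_succ (e : ℕ) (u : List α) :
    (List.replicate (e + 1) u).flatten = u ++ (List.replicate e u).flatten := by
  simp [List.replicate_succ]

theorem append_flatten_replicate (e : ℕ) (u : List α) :
    (List.replicate e u).flatten ++ u = u ++ (List.replicate e u).flatten := by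
  induction e with
  | zero => simp
  | succ e ih => rw [flatten_replicate_succ, List.append_assoc, ih]

theorem rotate_flatten_replicate (e : ℕ) (u : List α) :
    ((List.replicate e u).flatten).rotate u.length = (List.replicate e u).flatten := by
  cases e with
  | zero => simp
  | succ e =>
    rw [flatten_replicate_succ, List.rotate_eq_drop_append_take (by simp [length_flatten_replicate]),
      List.drop_left, List.take_left, append_flatten_replicate]

theorem flatten_replicate_mul (a b : ℕ) (u : List α) :
    (List.replicate a ((List.replicate b u).flatten)).flatten = (List.replicate (a * b) u).flatten := by
  induction a with
  | zero => simp
  | succ a ih =>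
    rw [flatten_replicate_succ, ih, Nat.succ_mul, Nat.add_comm, List.replicate_add,
      List.flatten_append]

theorem take_flatten_replicate {j e : ℕ} (hj : j ≤ e) (u : List α) :
    ((List.replicate e u).flatten).take (j * u.length) = (List.replicate j u).flatten := by
  rw [← Nat.add_sub_cancel' hj, List.replicate_add, List.flatten_append,
    ← length_flatten_replicate j u, List.take_left]

theorem eq_flatten_replicate_of_rotate :
    ∀ (e : ℕ) (v : List α) (p : ℕ), 0 < p → v.length = e * p → v.rotate p = v →
      v = (List.replicate e (v.take p)).flatten := by
  intro e
  induction e with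
  | zero =>
    intro v p _ hlen _
    simp only [Nat.zero_mul, List.length_eq_zero_iff] at hlen
    simp [hlen]
  | succ e ih =>
    intro v p hp hlen hrot
    have hple : p ≤ v.length := by rw [hlen]; nlinarith
    set u := v.take p with hu
    set w := v.drop p with hw
    have hulen : u.length = p := by rw [hu, List.length_take]; omega
    have hwlen : w.length = e * p := by rw [hw, List.length_drop, hlen]; ring_nf; omega
    have hv : u ++ w = v := List.take_append_drop p v
    have hrot' : w ++ u = v := by
      rw [← hrot]; rw [List.rotate_eq_drop_append_take hple]
    have huw : w ++ u = u ++ w := by rw [hv, hrot']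
    rcases Nat.eq_zero_or_pos e with rfl | he
    · have : w = [] := by rw [← List.length_eq_zero_iff, hwlen]; ring
      rw [this] at hv
      simp [← hv]
    · -- e ≥ 1 : show w has period p and apply ih
      have hpw : p ≤ w.length := by rw [hwlen]; nlinarith
      have htw : w.take p = u := by
        have h1 : (w ++ u).take p = w.take p := List.take_append_of_le_length hpw
        have h2 : (u ++ w).take p = u := by
          rw [← hulen, List.take_left]
        rw [← h1, huw, h2]
      have hwd : u ++ w.drop p = w := by rw [← htw]; exact List.take_append_drop p w
      have hdu : u ++ w.drop p = w.drop p ++ u := by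
        have := huw
        rw [← hwd] at this
        -- (u ++ d) ++ u = u ++ (u ++ d)
        rw [List.append_assoc] at this
        exact (List.append_cancel_left this).symm
      have hrotw : w.rotate p = w := by
        rw [List.rotate_eq_drop_append_take hpw, htw, ← hdu, hwd]
      have := ih w p hp hwlen hrotw
      rw [htw] at this
      rw [← hv, this, ← flatten_replicate_succ]

theorem exists_period (v : List α) (hv : v ≠ []) : ∃ p, 0 < p ∧ v.rotate p = v :=
  ⟨v.length, List.length_pos_iff.mpr hv, v.rotate_length⟩

section Per
variable [DecidableEq α]

def per (v : List α) : ℕ :=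
  if h : v = [] then 0 else Nat.find (exists_period v h)

variable {v : List α}

theorem per_pos (hv : v ≠ []) : 0 < per v := by
  rw [per, dif_neg hv]; exact (Nat.find_spec (exists_period v hv)).1

theorem rotate_per (hv : v ≠ []) : v.rotate (per v) = v := by
  rw [per, dif_neg hv]; exact (Nat.find_spec (exists_period v hv)).2

theorem per_le_length (hv : v ≠ []) : per v ≤ v.length := by
  rw [per, dif_neg hv]
  exact Nat.find_le ⟨List.length_pos_iff.mpr hv, v.rotate_length⟩

theorem per_dvd (hv : v ≠ []) {k : ℕ} (hk : v.rotate k = v) : per v ∣ k := by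
  have hmod := rotate_period_mod (rotate_per hv) k hk
  by_contra h
  have h1 : 0 < k % per v :=
    Nat.pos_of_ne_zero fun h0 => h (Nat.dvd_of_mod_eq_zero h0)
  have h2 : k % per v < per v := Nat.mod_lt _ (per_pos hv)
  rw [per, dif_neg hv] at h1 h2
  rw [per, dif_neg hv] at hmod
  exact Nat.find_min (exists_period v hv) h2 ⟨h1, hmod⟩

theorem per_dvd_length (hv : v ≠ []) : per v ∣ v.length := per_dvd hv v.rotate_length

theorem per_rotate (hv : v ≠ []) (k : ℕ) : per (v.rotate k) = per v := by
  have hv' : v.rotate k ≠ [] := fun h => hv (by simpa using h)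
  have key : ∀ p, ((v.rotate k).rotate p = v.rotate k ↔ v.rotate p = v) := by
    intro p
    rw [List.rotate_rotate, Nat.add_comm, ← List.rotate_rotate]
    exact (List.rotate_injective k).eq_iff
  apply _root_.le_antisymm
  · rw [per, dif_neg hv']
    exact Nat.find_le ⟨per_pos hv, (key _).mpr (rotate_per hv)⟩
  · rw [per, dif_neg hv]
    exact Nat.find_le ⟨per_pos hv', (key _).mp (rotate_per hv')⟩
end Per

section Prim
variable [DecidableEq α]

theorem eq_flatten_replicate_per {v : List α} (hv : v ≠ []) :
    v = (List.replicate (v.length / per v) (v.take (per v))).flatten :=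
  eq_flatten_replicate_of_rotate _ v (per v) (per_pos hv)
    (Nat.div_mul_cancel (per_dvd_length hv)).symm (rotate_per hv)

theorem per_flatten_replicate {u : List α} (hu : u ≠ []) (hprim : per u = u.length)
    {e : ℕ} (he : 0 < e) : per ((List.replicate e u).flatten) = u.length := by
  set v := (List.replicate e u).flatten with hvdef
  have hulen : 0 < u.length := List.length_pos_iff.mpr hu
  have hvlen : v.length = e * u.length := length_flatten_replicate e u
  have hvpos : 0 < v.length := by rw [hvlen]; positivity
  have hvne : v ≠ [] := by
    intro h; rw [h] at hvpos; simp at hvpos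
  have hperiod : v.rotate u.length = v := rotate_flatten_replicate e u
  have hdvd : per v ∣ u.length := per_dvd hvne hperiod
  have hle : per v ≤ u.length := Nat.le_of_dvd hulen hdvd
  rcases lt_or_eq_of_le hle with hlt | heq
  · exfalso
    have hdpos : 0 < per v := per_pos hvne
    have hdlen : per v ≤ v.length := per_le_length hvne
    have htlen : (v.take (per v)).length = per v := by
      rw [List.length_take]; omega
    have hvpow := eq_flatten_replicate_per hvne
    have huv : u = v.take u.length := by
      have h1 : v = u ++ (List.replicate (e-1) u).flatten := by
        rw [hvdef, ← flatten_replicate_succ]; congr 2; omega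
      conv_rhs => rw [h1]
      exact List.take_left.symm
    have hj : u.length / per v ≤ v.length / per v :=
      Nat.div_le_div_right (by rw [hvlen]; nlinarith)
    have h2 := take_flatten_replicate hj (v.take (per v))
    rw [htlen, Nat.div_mul_cancel hdvd, ← hvpow, ← huv] at h2
    have h3 := rotate_flatten_replicate (u.length / per v) (v.take (per v))
    rw [htlen, ← h2] at h3
    have := per_dvd hu h3
    have := Nat.le_of_dvd hdpos this
    omega
  · exact heq

end Prim

section MinRot
variable [LinearOrder α] [DecidableEq α]

def rotations (v : List α) : Finset (List α) :=
  (Finset.range v.length).image (v.rotate ·)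

theorem self_mem_rotations {v : List α} (hv : v ≠ []) : v ∈ rotations v := by
  apply Finset.mem_image.mpr
  exact ⟨0, Finset.mem_range.mpr (List.length_pos_iff.mpr hv), v.rotate_zero⟩

theorem rotations_nonempty {v : List α} (hv : v ≠ []) : (rotations v).Nonempty :=
  ⟨v, self_mem_rotations hv⟩

theorem mem_rotations {v x : List α} (hv : v ≠ []) :
    x ∈ rotations v ↔ ∃ k, x = v.rotate k := by
  constructor
  · intro h
    obtain ⟨k, _, hk⟩ := Finset.mem_image.mp h
    exact ⟨k, hk.symm⟩
  · rintro ⟨k, rfl⟩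
    apply Finset.mem_image.mpr
    exact ⟨k % v.length, Finset.mem_range.mpr (Nat.mod_lt _ (List.length_pos_iff.mpr hv)),
      List.rotate_mod v k⟩

theorem rotate_multiple_self (v : List α) (k : ℕ) :
    v.rotate (k + (v.length - k % v.length)) = v := by
  rcases Nat.eq_zero_or_pos v.length with h0 | hpos
  · have hv : v = [] := List.length_eq_zero_iff.mp h0
    simp [hv]
  have hmod := Nat.div_add_mod k v.length
  have hlt : k % v.length < v.length := Nat.mod_lt _ hpos
  have heq : k + (v.length - k % v.length) = v.length * (k / v.length) + v.length := by omega
  rw [heq, ← Nat.mul_succ, List.rotate_length_mul]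

theorem rotations_rotate (v : List α) (hv : v ≠ []) (k : ℕ) :
    rotations (v.rotate k) = rotations v := by
  have hv' : v.rotate k ≠ [] := fun h => hv (by simpa using h)
  ext x
  rw [mem_rotations hv', mem_rotations hv]
  constructor
  · rintro ⟨j, rfl⟩
    exact ⟨k + j, by rw [List.rotate_rotate]⟩
  · rintro ⟨i, rfl⟩
    refine ⟨(v.length - k % v.length) + i, ?_⟩
    rw [List.rotate_rotate, ← Nat.add_assoc, ← List.rotate_rotate, rotate_multiple_self]

noncomputable def minRot (v : List α) (hv : v ≠ []) : List α :=
  (rotations v).min' (rotations_nonempty hv)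

theorem minRot_mem {v : List α} (hv : v ≠ []) :
    ∃ k < v.length, minRot v hv = v.rotate k := by
  have := Finset.min'_mem (rotations v) (rotations_nonempty hv)
  obtain ⟨k, hk, hk2⟩ := Finset.mem_image.mp this
  exact ⟨k, Finset.mem_range.mp hk, hk2.symm⟩

theorem minRot_le {v : List α} (hv : v ≠ []) (k : ℕ) : minRot v hv ≤ v.rotate k :=
  Finset.min'_le _ _ ((mem_rotations hv).mpr ⟨k, rfl⟩)

theorem length_minRot {v : List α} (hv : v ≠ []) : (minRot v hv).length = v.length := by
  obtain ⟨k, _, hk⟩ := minRot_mem hv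
  rw [hk, List.length_rotate]

theorem minRot_ne_nil {v : List α} (hv : v ≠ []) : minRot v hv ≠ [] := by
  intro h
  have := length_minRot hv
  rw [h] at this
  exact hv (List.length_eq_zero_iff.mp this.symm)

theorem minRot_rotate {v : List α} (hv : v ≠ []) (k : ℕ) :
    minRot (v.rotate k) (fun h => hv (by simpa using h)) = minRot v hv := by
  have hr := rotations_rotate v hv k
  apply _root_.le_antisymm
  · exact Finset.min'_le _ _ (by rw [hr]; exact Finset.min'_mem _ _)
  · exact Finset.min'_le _ _ (by rw [← hr]; exact Finset.min'_mem _ _)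

theorem lyndon_minRot {v : List α} (hv : v ≠ []) (hprim : per v = v.length) :
    IsLyndon (minRot v hv) := by
  obtain ⟨k₀, hk₀, hmr⟩ := minRot_mem hv
  refine ⟨minRot_ne_nil hv, ?_⟩
  intro k hk hklen
  rw [length_minRot hv] at hklen
  have hle : minRot v hv ≤ (minRot v hv).rotate k := by
    conv_rhs => rw [hmr, List.rotate_rotate]
    exact minRot_le hv _
  rcases lt_or_eq_of_le hle with h | h
  · exact h
  · exfalso
    have hper : per (minRot v hv) = v.length := by
      rw [hmr, per_rotate hv, hprim]
    have : per (minRot v hv) ∣ k := per_dvd (minRot_ne_nil hv) h.symm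
    rw [hper] at this
    have := Nat.le_of_dvd hk this
    omega

theorem minRot_eq_self_of_lyndon {w : List α} (hl : IsLyndon w) (hw : w ≠ []) :
    minRot w hw = w := by
  apply _root_.le_antisymm
  · have := minRot_le hw 0
    rwa [List.rotate_zero] at this
  · apply Finset.le_min'
    intro x hx
    obtain ⟨k, rfl⟩ := (mem_rotations hw).mp hx
    rw [← List.rotate_mod]
    rcases Nat.eq_zero_or_pos (k % w.length) with h0 | hpos
    · rw [h0, List.rotate_zero]
    · exact le_of_lt (hl.2 _ hpos (Nat.mod_lt _ (List.length_pos_iff.mpr hw)))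

end MinRot

end LyndonAux

namespace LyndonAux

theorem per_eq_length_of_lyndon {α : Type*} [LinearOrder α] [DecidableEq α] {w : List α}
    (h : IsLyndon w) : per w = w.length := by
  have hw := h.1
  rcases lt_or_eq_of_le (per_le_length hw) with hlt | heq
  · exfalso
    have := h.2 (per w) (per_pos hw) hlt
    rw [rotate_per hw] at this
    exact lt_irrefl _ this
  · exact heq

theorem take_flatten_replicate_one {α : Type*} {e : ℕ} (he : 0 < e) (u : List α) :
    ((List.replicate e u).flatten).take u.length = u := by
  obtain ⟨e, rfl⟩ : ∃ e', e = e' + 1 := ⟨e - 1, by omega⟩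
  rw [flatten_replicate_succ, List.take_left]

theorem rotate_inj_of_prim {α : Type*} [DecidableEq α] {w : List α} (hw : w ≠ [])
    (hper : per w = w.length) {k k' : ℕ} (hk : k < w.length) (hk' : k' < w.length)
    (h : w.rotate k = w.rotate k') : k = k' := by
  have key : ∀ i j : ℕ, i ≤ j → j < w.length → w.rotate i = w.rotate j → w.rotate (j - i) = w := by
    intro i j hij hj hrot
    have h1 : (w.rotate i).rotate (w.length - i) = (w.rotate j).rotate (w.length - i) := by
      rw [hrot]
    rw [List.rotate_rotate, List.rotate_rotate, Nat.add_sub_cancel' (le_trans hij hj.le),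
      List.rotate_length] at h1
    have h2 : j + (w.length - i) = w.length + (j - i) := by omega
    rw [h2, ← List.rotate_rotate, List.rotate_length] at h1
    exact h1.symm
  rcases le_total k k' with hle | hle
  · by_contra hne
    have h1 := key k k' hle hk' h
    have h2 := per_dvd hw h1
    rw [hper] at h2
    have := Nat.le_of_dvd (by omega) h2
    omega
  · by_contra hne
    have h1 := key k' k hle hk h.symm
    have h2 := per_dvd hw h1
    rw [hper] at h2
    have := Nat.le_of_dvd (by omega) h2
    omega

variable (q m : ℕ)

abbrev LyndonSig (q m : ℕ) :=
  Σ d : {d : ℕ // d ∈ m.divisors}, ({w : List (Fin q) // w.length = d.1 ∧ IsLyndon w} × Fin d.1)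

def F : LyndonSig q m → {v : List (Fin q) // v.length = m}
  | ⟨⟨d, hd⟩, ⟨w, hw⟩, k⟩ =>
    ⟨(List.replicate (m / d) (w.rotate k.1)).flatten, by
      rw [length_flatten_replicate, List.length_rotate, hw.1]
      exact Nat.div_mul_cancel (Nat.mem_divisors.mp hd).1⟩

theorem per_pow_rot {d e : ℕ} (he : 0 < e) {w : List (Fin q)} (hw : w.length = d)
    (hl : IsLyndon w) (k : ℕ) :
    per ((List.replicate e (w.rotate k)).flatten) = d := by
  have hwne := hl.1
  have hune : w.rotate k ≠ [] := fun h => hwne (by simpa using h)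
  have hprim : per (w.rotate k) = (w.rotate k).length := by
    rw [per_rotate hwne, per_eq_length_of_lyndon hl, List.length_rotate]
  rw [per_flatten_replicate hune hprim he, List.length_rotate, hw]

theorem minRot_congr {α : Type*} [LinearOrder α] [DecidableEq α] {x y : List α} (h : x = y)
    (hx : x ≠ []) (hy : y ≠ []) : minRot x hx = minRot y hy := by
  subst h; rfl

theorem F_inj : Function.Injective (F q m) := by
  rintro ⟨⟨d, hd⟩, ⟨w, hw⟩, k⟩ ⟨⟨d', hd'⟩, ⟨w', hw'⟩, k'⟩ h
  have hval : (List.replicate (m / d) (w.rotate k.1)).flatten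
      = (List.replicate (m / d') (w'.rotate k'.1)).flatten := congrArg Subtype.val h
  have hm0 : m ≠ 0 := (Nat.mem_divisors.mp hd).2
  have hddvd : d ∣ m := (Nat.mem_divisors.mp hd).1
  have hd'dvd : d' ∣ m := (Nat.mem_divisors.mp hd').1
  have hdpos : 0 < d := Nat.pos_of_mem_divisors hd
  have hd'pos : 0 < d' := Nat.pos_of_mem_divisors hd'
  have he : 0 < m / d := Nat.div_pos (Nat.le_of_dvd (Nat.pos_of_ne_zero hm0) hddvd) hdpos
  have he' : 0 < m / d' := Nat.div_pos (Nat.le_of_dvd (Nat.pos_of_ne_zero hm0) hd'dvd) hd'pos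
  have hp1 := per_pow_rot q he hw.1 hw.2 k.1
  have hp2 := per_pow_rot q he' hw'.1 hw'.2 k'.1
  obtain rfl : d = d' := by
    have h1 : per ((List.replicate (m / d) (w.rotate k.1)).flatten) = d := hp1
    have h2 : per ((List.replicate (m / d') (w'.rotate k'.1)).flatten) = d' := hp2
    rw [← h1, hval, h2]
  have htk : w.rotate k.1 = w'.rotate k'.1 := by
    have t1 := take_flatten_replicate_one he (w.rotate k.1)
    have t2 := take_flatten_replicate_one he (w'.rotate k'.1)
    rw [hval] at t1
    have hll : (w.rotate k.1).length = (w'.rotate k'.1).length := by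
      rw [List.length_rotate, List.length_rotate]
      have e1 : w.length = d := hw.1
      have e2 : w'.length = d := hw'.1
      rw [e1, e2]
    rw [hll] at t1
    exact t1.symm.trans t2
  have hwne : w ≠ [] := hw.2.1
  have hw'ne : w' ≠ [] := hw'.2.1
  obtain rfl : w = w' := by
    have m1 := minRot_rotate hwne k.1
    have m2 := minRot_rotate hw'ne k'.1
    rw [minRot_eq_self_of_lyndon hw.2 hwne] at m1
    rw [minRot_eq_self_of_lyndon hw'.2 hw'ne] at m2
    rw [← m1, ← m2]
    exact minRot_congr htk _ _
  have hkk : k.1 = k'.1 := by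
    refine rotate_inj_of_prim hwne (per_eq_length_of_lyndon hw.2) ?_ ?_ htk
    · rw [hw.1]; exact k.2
    · rw [hw.1]; exact k'.2
  exact Sigma.ext rfl (heq_of_eq (Prod.ext rfl (Fin.ext hkk)))

theorem F_surj (hm : 0 < m) : Function.Surjective (F q m) := by
  rintro ⟨v, hv⟩
  have hvne : v ≠ [] := by
    intro h0
    rw [h0] at hv
    simp at hv
    omega
  set d := per v with hddef
  have hd_dvd : d ∣ m := by rw [← hv]; exact per_dvd_length hvne
  have hdpos : 0 < d := per_pos hvne
  have hdle : d ≤ v.length := per_le_length hvne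
  set u := v.take d with hudef
  have hulen : u.length = d := by rw [hudef, List.length_take]; omega
  have hune : u ≠ [] := by
    intro h0
    rw [h0] at hulen
    simp at hulen
    omega
  have hvpow : v = (List.replicate (v.length / d) u).flatten := eq_flatten_replicate_per hvne
  have hepos : 0 < m / d := Nat.div_pos (Nat.le_of_dvd hm hd_dvd) hdpos
  have hprim : per u = u.length := by
    set p := per u with hpdef
    have hppos : 0 < p := per_pos hune
    have hpdvd : p ∣ d := by rw [← hulen]; exact per_dvd_length hune
    have hupow : u = (List.replicate (u.length / p) (u.take p)).flatten :=
      eq_flatten_replicate_per hune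
    have htlen : (u.take p).length = p := by
      rw [List.length_take]
      have := per_le_length hune
      omega
    have hvpow2 : v = (List.replicate ((v.length / d) * (u.length / p)) (u.take p)).flatten := by
      rw [← flatten_replicate_mul]
      conv_lhs => rw [hvpow, hupow]
    have hrotp : v.rotate p = v := by
      have hr := rotate_flatten_replicate ((v.length / d) * (u.length / p)) (u.take p)
      rw [htlen] at hr
      conv_lhs => rw [hvpow2]
      rw [hr, ← hvpow2]
    have hdvdp : d ∣ p := per_dvd hvne hrotp
    rw [hulen]
    exact Nat.dvd_antisymm hpdvd hdvdp
  set w := minRot u hune with hwdef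
  have hlw : IsLyndon w := lyndon_minRot hune hprim
  obtain ⟨k₀, hk₀, hmr⟩ := minRot_mem hune
  rw [hulen] at hk₀
  have hwlen : w.length = d := by rw [hwdef, length_minRot hune, hulen]
  have hwrot : w.rotate ((d - k₀) % d) = u := by
    have h1 : w.rotate ((d - k₀) % d) = w.rotate (d - k₀) := by
      conv_lhs => rw [show (d - k₀) % d = (d - k₀) % w.length by rw [hwlen]]
      exact List.rotate_mod w (d - k₀)
    rw [h1, hwdef, hmr, List.rotate_rotate, Nat.add_sub_cancel' hk₀.le, ← hulen,
      List.rotate_length]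
  refine ⟨⟨⟨d, Nat.mem_divisors.mpr ⟨hd_dvd, hm.ne'⟩⟩, ⟨w, ⟨hwlen, hlw⟩⟩,
    ⟨(d - k₀) % d, Nat.mod_lt _ hdpos⟩⟩, ?_⟩
  apply Subtype.ext
  show (List.replicate (m / d) (w.rotate ((d - k₀) % d))).flatten = v
  rw [hwrot]
  conv_rhs => rw [hvpow]
  rw [hv]

noncomputable instance lyndonFintype (q d : ℕ) :
    Fintype {w : List (Fin q) // w.length = d ∧ IsLyndon w} := by
  letI : Fintype {l : List (Fin q) // l.length = d} :=
    inferInstanceAs (Fintype (List.Vector (Fin q) d))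
  refine Fintype.ofInjective
    (fun w => (⟨w.1, w.2.1⟩ : {l : List (Fin q) // l.length = d})) ?_
  intro a b h
  have h2 := congrArg Subtype.val h
  exact Subtype.ext h2

theorem card_words (q m : ℕ) : Nat.card {v : List (Fin q) // v.length = m} = q ^ m := by
  have e1 : {v : List (Fin q) // v.length = m} ≃ (Fin m → Fin q) :=
    Equiv.vectorEquivFin (Fin q) m
  rw [Nat.card_congr e1, Nat.card_eq_fintype_card]
  simp

theorem witt (q m : ℕ) (hm : 0 < m) :
    ∑ d ∈ m.divisors, d * LyndonCount q d = q ^ m := by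
  have hbij : Function.Bijective (F q m) := ⟨F_inj q m, F_surj q m hm⟩
  have h1 : Nat.card (LyndonSig q m) = q ^ m := by
    rw [Nat.card_congr (Equiv.ofBijective _ hbij), card_words]
  rw [← h1, Nat.card_eq_fintype_card, Fintype.card_sigma]
  rw [← Finset.sum_coe_sort m.divisors (fun d => d * LyndonCount q d)]
  apply Finset.sum_congr rfl
  intro i _
  rw [Fintype.card_prod, Fintype.card_fin, LyndonCount, Nat.card_eq_fintype_card, mul_comm]

end LyndonAux

namespace LyndonB

open PowerSeries

local notation "D" => PowerSeries.derivativeFun (R := ℚ)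
local notation "cf" => PowerSeries.coeff (R := ℚ)
local notation "cc" => PowerSeries.constantCoeff (R := ℚ)

theorem ne_zero_of_cc {f : ℚ⟦X⟧} (hf : cc f ≠ 0) : f ≠ 0 := fun h => hf (by simp [h])

theorem ld_mul {f g : ℚ⟦X⟧} (hf : cc f ≠ 0) (hg : cc g ≠ 0) :
    D (f * g) * (f * g)⁻¹ = D f * f⁻¹ + D g * g⁻¹ := by
  have hfg : cc (f * g) ≠ 0 := by rw [map_mul]; exact mul_ne_zero hf hg
  apply mul_right_cancel₀ (ne_zero_of_cc hfg)
  have h1 : (f * g)⁻¹ * (f * g) = 1 := PowerSeries.inv_mul_cancel _ hfg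
  have h2 : f⁻¹ * f = 1 := PowerSeries.inv_mul_cancel _ hf
  have h3 : g⁻¹ * g = 1 := PowerSeries.inv_mul_cancel _ hg
  have e1 : D (f * g) * (f * g)⁻¹ * (f * g) = D (f * g) := by
    rw [mul_assoc, h1, mul_one]
  have e2 : (D f * f⁻¹ + D g * g⁻¹) * (f * g)
      = D f * g * (f⁻¹ * f) + D g * f * (g⁻¹ * g) := by ring
  rw [e1, e2, h2, h3, mul_one, mul_one, derivativeFun_mul, smul_eq_mul, smul_eq_mul]
  ring

theorem D_one : D (1 : ℚ⟦X⟧) = 0 := by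
  exact derivativeFun_one

theorem coeff_D (f : ℚ⟦X⟧) (n : ℕ) : cf n (D f) = cf (n + 1) f * (n + 1) :=
  coeff_derivative f n

theorem ld_pow {f : ℚ⟦X⟧} (hf : cc f ≠ 0) (k : ℕ) :
    D (f ^ k) * (f ^ k)⁻¹ = (k : ℚ⟦X⟧) * (D f * f⁻¹) := by
  induction k with
  | zero => simp [D_one]
  | succ k ih =>
    have hfk : cc (f ^ k) ≠ 0 := by rw [map_pow]; exact pow_ne_zero _ hf
    rw [pow_succ, ld_mul hfk hf, ih]
    push_cast
    ring

theorem ld_prod {s : Finset ℕ} {F : ℕ → ℚ⟦X⟧} (hF : ∀ l ∈ s, cc (F l) ≠ 0) :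
    D (∏ l ∈ s, F l) * (∏ l ∈ s, F l)⁻¹ = ∑ l ∈ s, D (F l) * (F l)⁻¹ := by
  induction s using Finset.induction_on with
  | empty => simp [D_one]
  | @insert a s' hx ih =>
    have h1 : cc (F a) ≠ 0 := hF a (Finset.mem_insert_self a s')
    have h2 : ∀ l ∈ s', cc (F l) ≠ 0 := fun i hi => hF i (Finset.mem_insert_of_mem hi)
    have h3 : cc (∏ l ∈ s', F l) ≠ 0 := by
      rw [map_prod]
      exact Finset.prod_ne_zero_iff.mpr h2
    rw [Finset.prod_insert hx, Finset.sum_insert hx, ld_mul h1 h3, ih h2]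

theorem X_mul_D_one_sub (a : ℚ) (u : ℕ) (hu : 0 < u) :
    (X : ℚ⟦X⟧) * D (1 - PowerSeries.C (R := ℚ) a * X ^ u)
      = -(PowerSeries.C (R := ℚ) (a * u)) * X ^ u := by
  ext m
  cases m with
  | zero =>
    simp [coeff_zero_eq_constantCoeff_apply, map_mul, constantCoeff_X,
      map_pow, zero_pow hu.ne', map_neg]
  | succ m =>
    rw [coeff_succ_X_mul, coeff_D]
    rw [map_sub, coeff_one, coeff_C_mul, coeff_X_pow]
    rw [neg_mul, map_neg, coeff_C_mul, coeff_X_pow]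
    rcases eq_or_ne (m + 1) u with h | h
    · subst h
      simp only [Nat.succ_ne_zero, if_false, if_pos rfl]
      push_cast
      ring
    · simp [h, Nat.succ_ne_zero]

def geomT (u : ℕ) (a : ℚ) : ℚ⟦X⟧ :=
  PowerSeries.mk fun m => if u ∣ m ∧ 0 < m then a ^ (m / u) else 0

theorem coeff_geomT (u : ℕ) (a : ℚ) (m : ℕ) :
    cf m (geomT u a) = if u ∣ m ∧ 0 < m then a ^ (m / u) else 0 := by
  rw [geomT, coeff_mk]

theorem one_sub_mul_geomT (u : ℕ) (hu : 0 < u) (a : ℚ) :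
    (1 - PowerSeries.C (R := ℚ) a * X ^ u) * geomT u a = PowerSeries.C (R := ℚ) a * X ^ u := by
  ext m
  rw [sub_mul, one_mul, map_sub]
  have hre : PowerSeries.C (R := ℚ) a * X ^ u * geomT u a
      = PowerSeries.C (R := ℚ) a * (geomT u a * X ^ u) := by ring
  rw [hre, coeff_C_mul, coeff_mul_X_pow', coeff_C_mul, coeff_X_pow]
  simp only [coeff_geomT]
  rcases lt_trichotomy m u with h | h | h
  · rw [if_neg (fun hc => absurd (Nat.le_of_dvd hc.2 hc.1) (not_le.mpr h)),
      if_neg (not_le.mpr h), if_neg h.ne]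
    ring
  · subst h
    rw [if_pos ⟨dvd_refl m, hu⟩, if_pos le_rfl, Nat.sub_self,
      if_neg (by simp), if_pos rfl, Nat.div_self hu]
    ring
  · rw [if_neg h.ne', if_pos (le_of_lt h)]
    by_cases hd : u ∣ m
    · obtain ⟨k, rfl⟩ := hd
      have hk0 : 0 < u * k := by omega
      have hk : 0 < k := by
        rcases Nat.eq_zero_or_pos k with rfl | hk
        · simp at hk0
        · exact hk
      obtain ⟨k', rfl⟩ : ∃ k', k = k' + 1 := ⟨k - 1, by omega⟩
      have hm1 : u * (k' + 1) = u * k' + u := by ring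
      rw [hm1]
      have h3 : u * k' + u - u = u * k' := by omega
      rw [h3]
      have hk'0 : 0 < u * k' := by
        have : u < u * k' + u := by rw [← hm1]; exact h
        omega
      have hk' : 0 < k' := by
        rcases Nat.eq_zero_or_pos k' with rfl | hk'
        · simp at hk'0
        · exact hk'
      rw [if_pos ⟨⟨k' + 1, by ring⟩, by omega⟩, if_pos ⟨dvd_mul_right u k', hk'0⟩]
      have d1 : (u * k' + u) / u = k' + 1 := by
        rw [← hm1, Nat.mul_div_cancel_left _ hu]
      have d2 : u * k' / u = k' := Nat.mul_div_cancel_left _ hu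
      rw [d1, d2, pow_succ]
      ring
    · have hd2 : ¬ u ∣ m - u := by
        intro hc
        obtain ⟨c, hc'⟩ := hc
        exact hd ⟨c + 1, by rw [Nat.mul_add, mul_one, ← hc']; omega⟩
      rw [if_neg (fun hc => hd hc.1), if_neg (fun hc => hd2 hc.1)]
      ring

theorem geomT_eq (u : ℕ) (hu : 0 < u) (a : ℚ) :
    PowerSeries.C (R := ℚ) a * X ^ u * (1 - PowerSeries.C (R := ℚ) a * X ^ u)⁻¹ = geomT u a := by
  have hcc : cc (1 - PowerSeries.C (R := ℚ) a * X ^ u) ≠ 0 := by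
    rw [map_sub, map_one, map_mul, constantCoeff_C, map_pow, constantCoeff_X,
      zero_pow hu.ne', mul_zero, sub_zero]
    exact one_ne_zero
  have h1 : PowerSeries.C (R := ℚ) a * X ^ u * (1 - PowerSeries.C (R := ℚ) a * X ^ u)⁻¹
      = ((1 - PowerSeries.C (R := ℚ) a * X ^ u) * geomT u a)
        * (1 - PowerSeries.C (R := ℚ) a * X ^ u)⁻¹ := by rw [one_sub_mul_geomT u hu a]
  rw [h1]
  have h2 : ((1 - PowerSeries.C (R := ℚ) a * X ^ u) * geomT u a)
      * (1 - PowerSeries.C (R := ℚ) a * X ^ u)⁻¹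
      = geomT u a * ((1 - PowerSeries.C (R := ℚ) a * X ^ u)
        * (1 - PowerSeries.C (R := ℚ) a * X ^ u)⁻¹) := by ring
  rw [h2, PowerSeries.mul_inv_cancel _ hcc, mul_one]

theorem cc_one_sub (a : ℚ) (u : ℕ) (hu : 0 < u) :
    cc (1 - PowerSeries.C (R := ℚ) a * X ^ u) = 1 := by
  rw [map_sub, map_one, map_mul, constantCoeff_C, map_pow, constantCoeff_X,
    zero_pow hu.ne', mul_zero, sub_zero]

theorem X_ld_one_sub (a : ℚ) (u : ℕ) (hu : 0 < u) :
    (X : ℚ⟦X⟧) * (D (1 - PowerSeries.C (R := ℚ) a * X ^ u)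
        * (1 - PowerSeries.C (R := ℚ) a * X ^ u)⁻¹)
      = -(PowerSeries.C (R := ℚ) (u : ℚ)) * geomT u a := by
  have h1 : (X : ℚ⟦X⟧) * (D (1 - PowerSeries.C (R := ℚ) a * X ^ u)
      * (1 - PowerSeries.C (R := ℚ) a * X ^ u)⁻¹)
      = ((X : ℚ⟦X⟧) * D (1 - PowerSeries.C (R := ℚ) a * X ^ u))
        * (1 - PowerSeries.C (R := ℚ) a * X ^ u)⁻¹ := by ring
  rw [h1, X_mul_D_one_sub a u hu]
  have h2 : -(PowerSeries.C (R := ℚ) (a * u)) * X ^ u * (1 - PowerSeries.C (R := ℚ) a * X ^ u)⁻¹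
      = -(PowerSeries.C (R := ℚ) (u : ℚ))
        * (PowerSeries.C (R := ℚ) a * X ^ u * (1 - PowerSeries.C (R := ℚ) a * X ^ u)⁻¹) := by
    rw [show (a * (u:ℚ)) = (u:ℚ) * a by ring, map_mul]
    ring
  rw [h2, geomT_eq u hu a]

theorem sum_arith (q n s m : ℕ) (hs : 0 < s) (hm : m ≤ n) :
    ∑ l ∈ Finset.Icc 1 n, (LyndonCount q l : ℚ)
        * (-(((s * l : ℕ) : ℚ)) * (if s * l ∣ m ∧ 0 < m then 1 else 0))
      = -((s : ℕ) : ℚ) * (if s ∣ m ∧ 0 < m then ((q : ℚ)) ^ (m / s) else 0) := by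
  rcases Nat.eq_zero_or_pos m with rfl | hm0
  · simp
  by_cases hsm : s ∣ m
  · obtain ⟨m', rfl⟩ := hsm
    have hm'0 : 0 < m' := by
      rcases Nat.eq_zero_or_pos m' with rfl | h
      · simp at hm0
      · exact h
    rw [if_pos ⟨dvd_mul_right s m', hm0⟩, Nat.mul_div_cancel_left _ hs]
    have hterm : ∀ l ∈ Finset.Icc 1 n, (LyndonCount q l : ℚ)
        * (-(((s * l : ℕ) : ℚ)) * (if s * l ∣ s * m' ∧ 0 < s * m' then 1 else 0))
        = if l ∣ m' then -((s : ℚ)) * ((l : ℚ) * (LyndonCount q l : ℚ)) else 0 := by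
      intro l hl
      by_cases hld : l ∣ m'
      · rw [if_pos ⟨mul_dvd_mul_left s hld, hm0⟩, if_pos hld]
        push_cast
        ring
      · rw [if_neg ?_, if_neg hld]
        · ring
        · rintro ⟨hc, -⟩
          exact hld ((mul_dvd_mul_iff_left hs.ne').mp hc)
    rw [Finset.sum_congr rfl hterm, ← Finset.sum_filter]
    have hfil : (Finset.Icc 1 n).filter (· ∣ m') = m'.divisors := by
      ext l
      rw [Finset.mem_filter, Finset.mem_Icc, Nat.mem_divisors]
      constructor
      · rintro ⟨⟨h1, h2⟩, h3⟩
        exact ⟨h3, hm'0.ne'⟩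
      · rintro ⟨h1, h2⟩
        refine ⟨⟨Nat.pos_of_dvd_of_pos h1 hm'0, ?_⟩, h1⟩
        calc l ≤ m' := Nat.le_of_dvd hm'0 h1
          _ ≤ s * m' := Nat.le_mul_of_pos_left m' hs
          _ ≤ n := hm
    rw [hfil]
    have hcast : ∑ l ∈ m'.divisors, -((s : ℚ)) * ((l : ℚ) * (LyndonCount q l : ℚ))
        = -((s : ℚ)) * ((∑ l ∈ m'.divisors, l * LyndonCount q l : ℕ) : ℚ) := by
      rw [← Finset.mul_sum]
      push_cast
      ring
    rw [hcast, LyndonAux.witt q m' hm'0]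
    push_cast
    ring
  · rw [if_neg (fun hc => hsm hc.1), Finset.sum_eq_zero, mul_zero]
    intro l hl
    rw [if_neg (fun hc => hsm (dvd_trans (dvd_mul_right s l) hc.1))]
    ring

theorem coeff_X_ld_prod (q n s : ℕ) (hs : 0 < s) (m : ℕ) (hm : m ≤ n) :
    cf m ((X : ℚ⟦X⟧) * (D (∏ l ∈ Finset.Icc 1 n, (1 - X ^ (s * l)) ^ LyndonCount q l)
        * (∏ l ∈ Finset.Icc 1 n, (1 - X ^ (s * l)) ^ LyndonCount q l)⁻¹))
      = cf m ((X : ℚ⟦X⟧) * (D (1 - PowerSeries.C (R := ℚ) (q : ℚ) * X ^ s)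
        * (1 - PowerSeries.C (R := ℚ) (q : ℚ) * X ^ s)⁻¹)) := by
  have hone : ∀ l : ℕ, (1 : ℚ⟦X⟧) - X ^ (s * l)
      = 1 - PowerSeries.C (R := ℚ) (1 : ℚ) * X ^ (s * l) := by
    intro l
    rw [map_one, one_mul]
  have hupos : ∀ l ∈ Finset.Icc 1 n, 0 < s * l := by
    intro l hl
    have := (Finset.mem_Icc.mp hl).1
    positivity
  have hcc : ∀ l ∈ Finset.Icc 1 n, cc ((1 - X ^ (s * l)) ^ LyndonCount q l) ≠ 0 := by
    intro l hl
    rw [map_pow, hone l, cc_one_sub 1 _ (hupos l hl), one_pow]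
    exact one_ne_zero
  rw [ld_prod hcc, Finset.mul_sum]
  have hterm : ∀ l ∈ Finset.Icc 1 n,
      (X : ℚ⟦X⟧) * (D ((1 - X ^ (s * l)) ^ LyndonCount q l)
        * ((1 - X ^ (s * l)) ^ LyndonCount q l)⁻¹)
      = PowerSeries.C (R := ℚ) (LyndonCount q l : ℚ)
        * (-(PowerSeries.C (R := ℚ) ((s * l : ℕ) : ℚ)) * geomT (s * l) 1) := by
    intro l hl
    rw [hone l, ld_pow (by rw [cc_one_sub 1 _ (hupos l hl)]; exact one_ne_zero) (LyndonCount q l)]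
    rw [show (X : ℚ⟦X⟧) * ((LyndonCount q l : ℚ⟦X⟧)
        * (D (1 - PowerSeries.C (R := ℚ) 1 * X ^ (s * l))
          * (1 - PowerSeries.C (R := ℚ) 1 * X ^ (s * l))⁻¹))
      = (LyndonCount q l : ℚ⟦X⟧) * ((X : ℚ⟦X⟧)
        * (D (1 - PowerSeries.C (R := ℚ) 1 * X ^ (s * l))
          * (1 - PowerSeries.C (R := ℚ) 1 * X ^ (s * l))⁻¹)) from by ring]
    rw [X_ld_one_sub 1 (s * l) (hupos l hl), ← map_natCast (PowerSeries.C (R := ℚ)) (LyndonCount q l)]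
  rw [Finset.sum_congr rfl hterm, X_ld_one_sub (q : ℚ) s hs, map_sum]
  simp only [← map_neg (PowerSeries.C (R := ℚ)), coeff_C_mul, coeff_geomT, one_pow]
  exact sum_arith q n s m hs hm

theorem coeff_eq_of_deriv (f g : ℚ⟦X⟧) (n : ℕ)
    (h0 : cf 0 f = 1) (hg0 : cf 0 g = 1)
    (hD : ∀ j, j < n → cf j (D f * g) = cf j (D g * f)) :
    ∀ m, m ≤ n → cf m f = cf m g := by
  intro m
  induction m using Nat.strong_induction_on with
  | _ m ih =>
    intro hmn
    rcases Nat.eq_zero_or_pos m with rfl | hm0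
    · rw [h0, hg0]
    obtain ⟨j, rfl⟩ : ∃ j, m = j + 1 := ⟨m - 1, by omega⟩
    have hDj := hD j (by omega)
    rw [PowerSeries.coeff_mul, PowerSeries.coeff_mul] at hDj
    have hmem : ((j, 0) : ℕ × ℕ) ∈ Finset.HasAntidiagonal.antidiagonal j := by simp
    rw [← Finset.add_sum_erase _ _ hmem, ← Finset.add_sum_erase _ _ hmem] at hDj
    have heq : ∀ p ∈ (Finset.HasAntidiagonal.antidiagonal j).erase (j, 0),
        cf p.1 (D f) * cf p.2 g = cf p.1 (D g) * cf p.2 f := by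
      intro p hp
      obtain ⟨hpne, hpmem⟩ := Finset.mem_erase.mp hp
      have hpsum : p.1 + p.2 = j := Finset.HasAntidiagonal.mem_antidiagonal.mp hpmem
      have hp1 : p.1 < j := by
        rcases Nat.lt_or_ge p.1 j with h | h
        · exact h
        · exfalso
          apply hpne
          have h1 : p.1 = j := by omega
          have h2 : p.2 = 0 := by omega
          rw [← h1, ← h2]
      have e1 : cf (p.1 + 1) f = cf (p.1 + 1) g := ih (p.1 + 1) (by omega) (by omega)
      have e2 : cf p.2 f = cf p.2 g := ih p.2 (by omega) (by omega)
      rw [coeff_D, coeff_D, e1, e2]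
    rw [Finset.sum_congr rfl heq] at hDj
    have hfg : cf j (D f) * cf 0 g = cf j (D g) * cf 0 f := by linarith
    rw [coeff_D, coeff_D, h0, hg0, mul_one, mul_one] at hfg
    have hne : ((j : ℚ) + 1) ≠ 0 := by positivity
    exact mul_right_cancel₀ hne hfg

theorem cc_prod_one_sub (q n s : ℕ) (hs : 0 < s) :
    cf 0 (∏ l ∈ Finset.Icc 1 n, (1 - X ^ (s * l)) ^ LyndonCount q l) = 1 := by
  rw [coeff_zero_eq_constantCoeff_apply, map_prod]
  apply Finset.prod_eq_one
  intro l hl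
  have hu : 0 < s * l := by
    have := (Finset.mem_Icc.mp hl).1
    positivity
  rw [map_pow, show (1 : ℚ⟦X⟧) - X ^ (s * l) = 1 - PowerSeries.C (R := ℚ) (1:ℚ) * X ^ (s * l)
    from by rw [map_one, one_mul], cc_one_sub 1 _ hu, one_pow]

theorem main_congr (q n s : ℕ) (hs : 0 < s) :
    ∀ m, m ≤ n → cf m (∏ l ∈ Finset.Icc 1 n, (1 - X ^ (s * l)) ^ LyndonCount q l)
      = cf m (1 - PowerSeries.C (R := ℚ) (q : ℚ) * X ^ s) := by
  have hccP : cf 0 (∏ l ∈ Finset.Icc 1 n, (1 - X ^ (s * l)) ^ LyndonCount q l) = 1 :=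
    cc_prod_one_sub q n s hs
  have hccG : cf 0 (1 - PowerSeries.C (R := ℚ) (q : ℚ) * X ^ s) = 1 := by
    rw [coeff_zero_eq_constantCoeff_apply, cc_one_sub _ _ hs]
  set P : ℚ⟦X⟧ := ∏ l ∈ Finset.Icc 1 n, (1 - X ^ (s * l)) ^ LyndonCount q l with hP
  set G : ℚ⟦X⟧ := 1 - PowerSeries.C (R := ℚ) (q : ℚ) * X ^ s with hG
  apply coeff_eq_of_deriv P G n hccP hccG
  intro j hj
  have hccP' : cc P ≠ 0 := by
    rw [← coeff_zero_eq_constantCoeff_apply, hccP]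
    exact one_ne_zero
  have hccG' : cc G ≠ 0 := by
    rw [← coeff_zero_eq_constantCoeff_apply, hccG]
    exact one_ne_zero
  have hdvd : (X : ℚ⟦X⟧) ^ n ∣ (D P * P⁻¹ - D G * G⁻¹) := by
    rw [PowerSeries.X_pow_dvd_iff]
    intro i hi
    rw [map_sub]
    have h1 : cf i (D P * P⁻¹) = cf (i + 1) ((X : ℚ⟦X⟧) * (D P * P⁻¹)) :=
      (coeff_succ_X_mul i _).symm
    have h2 : cf i (D G * G⁻¹) = cf (i + 1) ((X : ℚ⟦X⟧) * (D G * G⁻¹)) :=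
      (coeff_succ_X_mul i _).symm
    rw [h1, h2, coeff_X_ld_prod q n s hs (i + 1) (by omega), sub_self]
  have hE : D P * G - D G * P = (D P * P⁻¹ - D G * G⁻¹) * (P * G) := by
    have e1 : (D P * P⁻¹ - D G * G⁻¹) * (P * G)
        = D P * G * (P⁻¹ * P) - D G * P * (G⁻¹ * G) := by ring
    rw [e1, PowerSeries.inv_mul_cancel _ hccP', PowerSeries.inv_mul_cancel _ hccG',
      mul_one, mul_one]
  have hdvd2 : (X : ℚ⟦X⟧) ^ n ∣ (D P * G - D G * P) := by
    rw [hE]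
    exact Dvd.dvd.mul_right hdvd _
  rw [PowerSeries.X_pow_dvd_iff] at hdvd2
  have := hdvd2 j hj
  rw [map_sub, sub_eq_zero] at this
  exact this

theorem final (q : ℕ) (hq : 1 ≤ q) (n : ℕ) :
    PowerSeries.coeff (R := ℚ) n
        (∏ l ∈ Finset.Icc 1 n, (1 + PowerSeries.X ^ l) ^ LyndonCount q l) =
      PowerSeries.coeff (R := ℚ) n
        ((1 - PowerSeries.C (R := ℚ) q * PowerSeries.X ^ 2) *
          (1 - PowerSeries.C (R := ℚ) q * PowerSeries.X)⁻¹) := by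
  have h1 := main_congr q n 1 one_pos
  have h2 := main_congr q n 2 two_pos
  set A : ℚ⟦X⟧ := ∏ l ∈ Finset.Icc 1 n, (1 + X ^ l) ^ LyndonCount q l with hA
  set P : ℚ⟦X⟧ := ∏ l ∈ Finset.Icc 1 n, (1 - X ^ l) ^ LyndonCount q l with hP
  set Q : ℚ⟦X⟧ := ∏ l ∈ Finset.Icc 1 n, (1 - X ^ (2 * l)) ^ LyndonCount q l with hQ
  set G1 : ℚ⟦X⟧ := 1 - PowerSeries.C (R := ℚ) (q : ℚ) * X with hG1
  set G2 : ℚ⟦X⟧ := 1 - PowerSeries.C (R := ℚ) (q : ℚ) * X ^ 2 with hG2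
  have h1' : ∀ m, m ≤ n → cf m P = cf m G1 := by
    intro m hm
    have hth := h1 m hm
    rw [show (∏ l ∈ Finset.Icc 1 n, ((1:ℚ⟦X⟧) - X ^ (1 * l)) ^ LyndonCount q l) = P
      from Finset.prod_congr rfl (fun l _ => by rw [one_mul])] at hth
    rw [pow_one] at hth
    exact hth
  have h2' : ∀ m, m ≤ n → cf m Q = cf m G2 := h2
  have hAPQ : A * P = Q := by
    rw [hA, hP, hQ, ← Finset.prod_mul_distrib]
    apply Finset.prod_congr rfl
    intro l _
    rw [← mul_pow]
    congr 1
    rw [show (X : ℚ⟦X⟧) ^ (2 * l) = X ^ l * X ^ l from by rw [two_mul, pow_add]]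
    ring
  have hccG1 : cc G1 ≠ 0 := by
    rw [hG1, show (X : ℚ⟦X⟧) = X ^ 1 from (pow_one X).symm, cc_one_sub _ 1 one_pos]
    exact one_ne_zero
  have hR : G2 * G1⁻¹ * G1 = G2 := by
    rw [mul_assoc, PowerSeries.inv_mul_cancel _ hccG1, mul_one]
  have hdvdP : (X : ℚ⟦X⟧) ^ (n + 1) ∣ G1 - P := by
    rw [PowerSeries.X_pow_dvd_iff]
    intro m hm
    rw [map_sub, h1' m (by omega), sub_self]
  have hdvdQ : (X : ℚ⟦X⟧) ^ (n + 1) ∣ Q - G2 := by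
    rw [PowerSeries.X_pow_dvd_iff]
    intro m hm
    rw [map_sub, h2' m (by omega), sub_self]
  have key : (X : ℚ⟦X⟧) ^ (n + 1) ∣ (A - G2 * G1⁻¹) * G1 := by
    have e : (A - G2 * G1⁻¹) * G1 = A * (G1 - P) + (Q - G2) := by
      rw [sub_mul, hR, show A * (G1 - P) + (Q - G2) = A * G1 - A * P + Q - G2 from by ring,
        hAPQ]
      ring
    rw [e]
    exact dvd_add (Dvd.dvd.mul_left hdvdP A) hdvdQ
  have key2 : (X : ℚ⟦X⟧) ^ (n + 1) ∣ A - G2 * G1⁻¹ := by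
    have e2 : A - G2 * G1⁻¹ = (A - G2 * G1⁻¹) * G1 * G1⁻¹ := by
      rw [mul_assoc, PowerSeries.mul_inv_cancel _ hccG1, mul_one]
    rw [e2]
    exact Dvd.dvd.mul_right key _
  have hfin := (PowerSeries.X_pow_dvd_iff.mp key2) n (by omega)
  rw [map_sub, sub_eq_zero] at hfin
  exact hfin

end LyndonB

/-- As formal power series over `ℚ`,
`∏_{l ≥ 1} (1 + x^l)^{L_q(l)} = (1 - q x^2) / (1 - q x)`.
The infinite product is understood coefficientwise: the coefficient of `x^n`
only involves the factors with `l ≤ n`, since every factor with `l > n` is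
congruent to `1` modulo `x^{n+1}`. -/
theorem lyndon_product_eq (q : ℕ) (hq : 1 ≤ q) (n : ℕ) :
    PowerSeries.coeff (R := ℚ) n
        (∏ l ∈ Finset.Icc 1 n, (1 + PowerSeries.X ^ l) ^ LyndonCount q l) =
      PowerSeries.coeff (R := ℚ) n
        ((1 - PowerSeries.C (R := ℚ) q * PowerSeries.X ^ 2) *
          (1 - PowerSeries.C (R := ℚ) q * PowerSeries.X)⁻¹) :=
  LyndonB.final q hq n
end

section
/- For any function L : ℕ → ℕ satisfying ∑_{l | m} l·L(l) = q^m for all m ≥ 1, the coefficient of x^n (n ≥ 2) in the formal power series ∏_{l≥1} (1 + x^l)^{L(l)} equals (q−1)·q^{n−1}. -/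
open PowerSeries Finset

/-- Formal inverse of `1 - X^k`. -/
noncomputable def gS (k : ℕ) : PowerSeries ℚ :=
  PowerSeries.mk fun m => if k ∣ m then 1 else 0

lemma one_sub_X_pow_mul_gS (k : ℕ) (hk : 1 ≤ k) : (1 - X ^ k) * gS k = 1 := by
  ext m
  rw [sub_mul, one_mul, map_sub, coeff_X_pow_mul']
  simp only [gS, coeff_mk, coeff_one]
  rcases Nat.eq_zero_or_pos m with rfl | hm
  · rw [if_neg (by omega : ¬ k ≤ 0), if_pos (dvd_zero k), if_pos rfl]
    ring
  · by_cases h : k ≤ m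
    · rw [if_pos h]
      have : k ∣ m ↔ k ∣ m - k := by
        constructor
        · intro hd; exact (Nat.dvd_sub hd dvd_rfl)
        · intro hd; have := Nat.dvd_add hd (dvd_refl k); rwa [Nat.sub_add_cancel h] at this
      by_cases hd : k ∣ m
      · rw [if_pos hd, if_pos (this.mp hd)]; simp [hm.ne']
      · rw [if_neg hd, if_neg (fun c => hd (this.mpr c))]; simp [hm.ne']
    · rw [if_neg h, if_neg (fun hd => h (Nat.le_of_dvd hm hd))]
      simp [hm.ne']

lemma coeff_X_pow_mul_gS (k j : ℕ) (hk : 1 ≤ k) :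
    (PowerSeries.coeff (R := ℚ) j) (X ^ (k - 1) * gS k) = if k ∣ j + 1 then 1 else 0 := by
  rw [coeff_X_pow_mul']
  simp only [gS, coeff_mk]
  by_cases h : k - 1 ≤ j
  · rw [if_pos h]
    have : k ∣ j - (k - 1) ↔ k ∣ j + 1 := by
      have h1 : j - (k - 1) = j + 1 - k := by omega
      rw [h1]
      constructor
      · intro hd; have := Nat.dvd_add hd (dvd_refl k); rwa [Nat.sub_add_cancel (by omega)] at this
      · intro hd; exact Nat.dvd_sub hd dvd_rfl
    by_cases hd : k ∣ j + 1
    · rw [if_pos (this.mpr hd), if_pos hd]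
    · rw [if_neg (fun c => hd (this.mp c)), if_neg hd]
  · rw [if_neg h, if_neg (fun hd => by have := Nat.le_of_dvd (by omega) hd; omega)]

lemma deriv_one_sub_pow (d e : ℕ) (hd : 1 ≤ d) :
    d⁄dX ℚ ((1 - X ^ d) ^ e) =
      (1 - X ^ d) ^ e * (-((e * d : ℕ) • (X ^ (d - 1) * gS d))) := by
  have hX : d⁄dX ℚ (X ^ d : ℚ⟦X⟧) = d • (X:ℚ⟦X⟧) ^ (d - 1) := by
    rw [Derivation.leibniz_pow]
    simp
  have hbase : d⁄dX ℚ ((1 : ℚ⟦X⟧) - X ^ d) = -(d • (X:ℚ⟦X⟧) ^ (d - 1)) := by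
    rw [map_sub, hX]
    simp
  cases e with
  | zero => simp
  | succ e =>
    rw [Derivation.leibniz_pow, hbase]
    have hpow : ((1 : ℚ⟦X⟧) - X ^ d) ^ e = (1 - X ^ d) ^ (e + 1) * gS d := by
      symm
      calc (1 - X ^ d) ^ (e+1) * gS d = (1 - X^d)^e * ((1 - X^d) * gS d) := by ring
      _ = (1 - X ^ d) ^ e := by rw [one_sub_X_pow_mul_gS d hd, mul_one]
    rw [Nat.succ_sub_one, hpow]
    simp only [smul_eq_mul, nsmul_eq_mul]
    push_cast
    ring

lemma deriv_prod (s : Finset ℕ) (d e : ℕ → ℕ) (hd : ∀ i ∈ s, 1 ≤ d i) :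
    d⁄dX ℚ (∏ i ∈ s, (1 - X ^ (d i)) ^ (e i)) =
      (∏ i ∈ s, (1 - X ^ (d i)) ^ (e i)) *
        (∑ i ∈ s, -((e i * d i : ℕ) • (X ^ (d i - 1) * gS (d i)))) := by
  classical
  induction s using Finset.induction_on with
  | empty => simp
  | @insert a s ha ih =>
    rw [Finset.prod_insert ha, Finset.sum_insert ha, Derivation.leibniz,
      ih (fun i hi => hd i (Finset.mem_insert_of_mem hi)),
      deriv_one_sub_pow (d a) (e a) (hd a (Finset.mem_insert_self a s))]
    simp only [smul_eq_mul]
    ring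

lemma coeff_D (s : Finset ℕ) (d e : ℕ → ℕ) (hd : ∀ i ∈ s, 1 ≤ d i) (j : ℕ) :
    (PowerSeries.coeff (R := ℚ) j) (∑ i ∈ s, -((e i * d i : ℕ) • (X ^ (d i - 1) * gS (d i)))) =
      -∑ i ∈ s.filter (fun i => d i ∣ j + 1), ((e i * d i : ℕ) : ℚ) := by
  rw [map_sum, ← Finset.sum_neg_distrib, Finset.sum_filter]
  refine Finset.sum_congr rfl fun i hi => ?_
  rw [map_neg, map_nsmul, coeff_X_pow_mul_gS (d i) j (hd i hi)]
  by_cases h : d i ∣ j + 1 <;> simp [h]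

lemma coeff_rec (s : Finset ℕ) (d e : ℕ → ℕ) (hd : ∀ i ∈ s, 1 ≤ d i) (m : ℕ) (hm : 1 ≤ m) :
    (m : ℚ) * (PowerSeries.coeff (R := ℚ) m) (∏ i ∈ s, (1 - X ^ (d i)) ^ (e i)) =
      -∑ j ∈ Finset.range m,
        (PowerSeries.coeff (R := ℚ) j) (∏ i ∈ s, (1 - X ^ (d i)) ^ (e i)) *
          (∑ i ∈ s.filter (fun i => d i ∣ (m - j)), ((e i * d i : ℕ) : ℚ)) := by
  have h1 : (PowerSeries.coeff (R := ℚ) (m - 1)) (d⁄dX ℚ (∏ i ∈ s, (1 - X ^ (d i)) ^ (e i))) =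
      (PowerSeries.coeff (R := ℚ) m) (∏ i ∈ s, (1 - X ^ (d i)) ^ (e i)) * m := by
    rw [PowerSeries.coeff_derivative, (by omega : m - 1 + 1 = m)]
    congr 1
    have : ((m - 1 : ℕ) : ℚ) = (m : ℚ) - 1 := by
      rw [Nat.cast_sub hm, Nat.cast_one]
    rw [this]; ring
  rw [deriv_prod s d e hd, PowerSeries.coeff_mul,
    Finset.Nat.sum_antidiagonal_eq_sum_range_succ_mk,
    (by omega : (m-1).succ = m)] at h1
  rw [mul_comm, ← h1, ← Finset.sum_neg_distrib]
  refine Finset.sum_congr rfl fun j hj => ?_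
  rw [coeff_D s d e hd (m - 1 - j)]
  have h3 : m - 1 - j + 1 = m - j := by
    have := Finset.mem_range.mp hj; omega
  rw [h3]
  ring

lemma coeff_zero_prod_sub (s : Finset ℕ) (d e : ℕ → ℕ) (hd : ∀ i ∈ s, 1 ≤ d i) :
    (PowerSeries.coeff (R := ℚ) 0) (∏ i ∈ s, (1 - X ^ (d i)) ^ (e i)) = 1 := by
  rw [coeff_zero_eq_constantCoeff, map_prod]
  refine Finset.prod_eq_one fun i hi => ?_
  rw [map_pow, map_sub, map_one, map_pow, constantCoeff_X,
    zero_pow (by have := hd i hi; omega), sub_zero, one_pow]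

lemma coeff_zero_prod_add (s : Finset ℕ) (d e : ℕ → ℕ) (hd : ∀ i ∈ s, 1 ≤ d i) :
    (PowerSeries.coeff (R := ℚ) 0) (∏ i ∈ s, (1 + X ^ (d i)) ^ (e i)) = 1 := by
  rw [coeff_zero_eq_constantCoeff, map_prod]
  refine Finset.prod_eq_one fun i hi => ?_
  rw [map_pow, map_add, map_one, map_pow, constantCoeff_X,
    zero_pow (by have := hd i hi; omega), add_zero, one_pow]

/-- For any function `L : ℕ → ℕ` satisfying the divisor-sum identity
`∑_{l ∣ m} l·L(l) = q^m` for all `m ≥ 1`, the coefficient of `x^n` (`n ≥ 2`) in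
the formal power series `∏_{l ≥ 1} (1 + x^l)^{L(l)}` equals `(q-1)·q^{n-1}`.
The infinite product is understood coefficientwise: the coefficient of `x^n`
only involves the factors with `l ≤ n`. -/
theorem coeff_product_of_divisor_sum (q : ℕ) (hq : 1 ≤ q) (L : ℕ → ℕ)
    (hL : ∀ m : ℕ, 1 ≤ m → ∑ l ∈ m.divisors, l * L l = q ^ m)
    (n : ℕ) (hn : 2 ≤ n) :
    PowerSeries.coeff (R := ℚ) n (∏ l ∈ Finset.Icc 1 n, (1 + PowerSeries.X ^ l) ^ L l) =
      ((q - 1) * q ^ (n - 1) : ℕ) := by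
  classical
  -- divisor-filter evaluations
  have hfilt : ∀ r : ℕ, 1 ≤ r → r ≤ n →
      (Finset.Icc 1 n).filter (fun i => i ∣ r) = r.divisors := by
    intro r hr1 hrn
    ext i
    simp only [Finset.mem_filter, Finset.mem_Icc, Nat.mem_divisors]
    constructor
    · rintro ⟨⟨h1, h2⟩, hd⟩; exact ⟨hd, by omega⟩
    · rintro ⟨hd, hr0⟩
      have hi0 : i ≠ 0 := by rintro rfl; exact hr0 (Nat.eq_zero_of_zero_dvd hd)
      exact ⟨⟨by omega, le_trans (Nat.le_of_dvd (by omega) hd) hrn⟩, hd⟩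
  have hS : ∀ r : ℕ, 1 ≤ r → r ≤ n →
      ∑ i ∈ (Finset.Icc 1 n).filter (fun i => i ∣ r), ((L i * i : ℕ) : ℚ) = (q : ℚ) ^ r := by
    intro r hr1 hrn
    rw [hfilt r hr1 hrn]
    rw [← Nat.cast_sum]
    have : ∑ i ∈ r.divisors, L i * i = ∑ i ∈ r.divisors, i * L i :=
      Finset.sum_congr rfl fun i _ => mul_comm _ _
    rw [this, hL r hr1]
    push_cast
    ring
  have hSH : ∀ r : ℕ, 1 ≤ r → r ≤ n →
      ∑ i ∈ (Finset.Icc 1 n).filter (fun i => 2 * i ∣ r), ((L i * (2 * i) : ℕ) : ℚ) =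
        if 2 ∣ r then 2 * (q : ℚ) ^ (r / 2) else 0 := by
    intro r hr1 hrn
    by_cases h2 : 2 ∣ r
    · rw [if_pos h2]
      obtain ⟨t, rfl⟩ := h2
      have ht1 : 1 ≤ t := by omega
      have hfe : (Finset.Icc 1 n).filter (fun i => 2 * i ∣ 2 * t) = t.divisors := by
        rw [Finset.filter_congr (fun i _ => by
          simpa using Nat.mul_dvd_mul_iff_left (a := 2) (b := i) (c := t) (by norm_num))]
        exact hfilt t ht1 (by omega)
      rw [hfe, ← Nat.cast_sum]
      have : ∑ i ∈ t.divisors, L i * (2 * i) = 2 * ∑ i ∈ t.divisors, i * L i := by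
        rw [Finset.mul_sum]
        exact Finset.sum_congr rfl fun i _ => by ring
      rw [this, hL t ht1, (by omega : 2 * t / 2 = t)]
      push_cast
      ring
    · rw [if_neg h2]
      rw [Finset.filter_false_of_mem, Finset.sum_empty]
      intro i _ hd
      exact h2 (dvd_trans ⟨i, rfl⟩ hd)
  -- the three series
  set F : ℚ⟦X⟧ := ∏ i ∈ Finset.Icc 1 n, (1 - X ^ i) ^ (L i) with hF
  set H : ℚ⟦X⟧ := ∏ i ∈ Finset.Icc 1 n, (1 - X ^ (2 * i)) ^ (L i) with hH
  set P : ℚ⟦X⟧ := ∏ i ∈ Finset.Icc 1 n, (1 + X ^ i) ^ (L i) with hP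
  have hd1 : ∀ i ∈ Finset.Icc 1 n, 1 ≤ (fun i => i) i := fun i hi => (Finset.mem_Icc.mp hi).1
  have hd2 : ∀ i ∈ Finset.Icc 1 n, 1 ≤ (fun i => 2 * i) i := fun i hi => by
    have := (Finset.mem_Icc.mp hi).1
    show 1 ≤ 2 * i
    omega
  -- constant coefficients
  have ha0 : (PowerSeries.coeff (R := ℚ) 0) F = 1 := coeff_zero_prod_sub _ _ _ hd1
  have hb0 : (PowerSeries.coeff (R := ℚ) 0) H = 1 := coeff_zero_prod_sub _ _ _ hd2
  have hc0 : (PowerSeries.coeff (R := ℚ) 0) P = 1 := coeff_zero_prod_add _ _ _ hd1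
  -- coefficients of F
  have hA : ∀ m, m ≤ n → (PowerSeries.coeff (R := ℚ) m) F =
      if m = 0 then 1 else if m = 1 then -(q:ℚ) else 0 := by
    intro m
    induction m using Nat.strong_induction_on with
    | _ m ih =>
      intro hmn
      rcases Nat.eq_zero_or_pos m with rfl | hm
      · simpa using ha0
      have hrec := coeff_rec (Finset.Icc 1 n) (fun i => i) L hd1 m hm
      rw [← hF] at hrec
      have hsum : ∑ j ∈ Finset.range m, (PowerSeries.coeff (R := ℚ) j) F *
            (∑ i ∈ (Finset.Icc 1 n).filter (fun i => i ∣ m - j), ((L i * i : ℕ) : ℚ)) =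
          ∑ j ∈ Finset.range m,
            (if j = 0 then 1 else if j = 1 then -(q:ℚ) else 0) * (q:ℚ) ^ (m - j) := by
        refine Finset.sum_congr rfl fun j hj => ?_
        have hjm := Finset.mem_range.mp hj
        rw [ih j hjm (by omega), hS (m - j) (by omega) (by omega)]
      rw [hsum] at hrec
      rcases (by omega : m = 1 ∨ 2 ≤ m) with rfl | h2
      · -- m = 1
        rw [if_neg (by omega), if_pos rfl]
        rw [Finset.sum_range_one] at hrec
        norm_num at hrec
        linarith
      · -- m ≥ 2
        rw [if_neg (by omega), if_neg (by omega)]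
        have hzero : ∑ j ∈ Finset.range m,
            (if j = 0 then 1 else if j = 1 then -(q:ℚ) else 0) * (q:ℚ) ^ (m - j) = 0 := by
          rw [← Finset.sum_subset
            (show ({0, 1} : Finset ℕ) ⊆ Finset.range m by
              intro x hx; simp at hx; rcases hx with rfl | rfl <;> simp <;> omega)
            (fun x hx hnx => by
              simp only [Finset.mem_insert, Finset.mem_singleton] at hnx
              push_neg at hnx
              rw [if_neg hnx.1, if_neg hnx.2, zero_mul])]
          rw [Finset.sum_pair (by omega : (0:ℕ) ≠ 1)]
          have e1 : (q:ℚ) ^ (m - 0) = (q:ℚ) * (q:ℚ) ^ (m - 1) := by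
            rw [Nat.sub_zero, ← pow_succ', (by omega : m - 1 + 1 = m)]
          rw [e1]
          norm_num
        rw [hzero, neg_zero] at hrec
        have hm0 : (m : ℚ) ≠ 0 := by positivity
        rcases mul_eq_zero.mp hrec with h | h
        · exact absurd h hm0
        · exact h
  -- coefficients of H
  have hB : ∀ m, m ≤ n → (PowerSeries.coeff (R := ℚ) m) H =
      if m = 0 then 1 else if m = 2 then -(q:ℚ) else 0 := by
    intro m
    induction m using Nat.strong_induction_on with
    | _ m ih =>
      intro hmn
      rcases Nat.eq_zero_or_pos m with rfl | hm
      · simpa using hb0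
      have hrec := coeff_rec (Finset.Icc 1 n) (fun i => 2 * i) L hd2 m hm
      rw [← hH] at hrec
      have hsum : ∑ j ∈ Finset.range m, (PowerSeries.coeff (R := ℚ) j) H *
            (∑ i ∈ (Finset.Icc 1 n).filter (fun i => 2 * i ∣ m - j), ((L i * (2 * i) : ℕ) : ℚ)) =
          ∑ j ∈ Finset.range m,
            (if j = 0 then 1 else if j = 2 then -(q:ℚ) else 0) *
              (if 2 ∣ m - j then 2 * (q:ℚ) ^ ((m - j) / 2) else 0) := by
        refine Finset.sum_congr rfl fun j hj => ?_
        have hjm := Finset.mem_range.mp hj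
        rw [ih j hjm (by omega), hSH (m - j) (by omega) (by omega)]
      rw [hsum] at hrec
      have key : ∑ j ∈ Finset.range m,
          (if j = 0 then 1 else if j = 2 then -(q:ℚ) else 0) *
            (if 2 ∣ m - j then 2 * (q:ℚ) ^ ((m - j) / 2) else 0) =
          if m = 1 then 0 else if m = 2 then 2 * (q:ℚ) else 0 := by
        rcases (by omega : m = 1 ∨ m = 2 ∨ 3 ≤ m) with rfl | rfl | h3
        · norm_num
        · rw [Finset.sum_range_succ, Finset.sum_range_one]
          norm_num
        · rw [if_neg (by omega), if_neg (by omega)]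
          rw [← Finset.sum_subset
            (show ({0, 2} : Finset ℕ) ⊆ Finset.range m by
              intro x hx; simp at hx; rcases hx with rfl | rfl <;> simp <;> omega)
            (fun x hx hnx => by
              simp only [Finset.mem_insert, Finset.mem_singleton] at hnx
              push_neg at hnx
              rw [if_neg hnx.1, if_neg hnx.2, zero_mul])]
          rw [Finset.sum_pair (by omega : (0:ℕ) ≠ 2)]
          by_cases h2m : 2 ∣ m
          · rw [if_pos (by omega : 2 ∣ m - 0), if_pos (by omega : 2 ∣ m - 2)]
            have e2 : (m - 0) / 2 = (m - 2) / 2 + 1 := by omega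
            rw [e2, pow_succ]
            norm_num
            ring
          · rw [if_neg (by omega : ¬ 2 ∣ m - 0), if_neg (by omega : ¬ 2 ∣ m - 2)]
            norm_num
      rw [key] at hrec
      rcases (by omega : m = 1 ∨ m = 2 ∨ 3 ≤ m) with rfl | rfl | h3
      · rw [if_neg (by omega), if_neg (by omega)]
        norm_num at hrec
        linarith
      · rw [if_neg (by omega), if_pos rfl]
        rw [if_neg (by omega), if_pos rfl] at hrec
        norm_num at hrec
        linarith
      · rw [if_neg (by omega), if_neg (by omega)]
        rw [if_neg (by omega), if_neg (by omega), neg_zero] at hrec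
        have hm0 : (m : ℚ) ≠ 0 := by positivity
        rcases mul_eq_zero.mp hrec with h | h
        · exact absurd h hm0
        · exact h
  -- P * F = H
  have hPFH : P * F = H := by
    rw [hP, hF, hH, ← Finset.prod_mul_distrib]
    refine Finset.prod_congr rfl fun i hi => ?_
    rw [← mul_pow]
    congr 1
    have : (X : ℚ⟦X⟧) ^ (2 * i) = (X ^ i) ^ 2 := by rw [← pow_mul, mul_comm]
    rw [this]
    ring
  -- coefficients of P
  have hC : ∀ m, m ≤ n → (PowerSeries.coeff (R := ℚ) m) P =
      if m = 0 then 1 else if m = 1 then (q:ℚ) else (q:ℚ) ^ m - (q:ℚ) ^ (m - 1) := by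
    intro m
    induction m using Nat.strong_induction_on with
    | _ m ih =>
      intro hmn
      rcases Nat.eq_zero_or_pos m with rfl | hm
      · simpa using hc0
      have hconv : (PowerSeries.coeff (R := ℚ) m) (P * F) = (PowerSeries.coeff (R := ℚ) m) H := by
        rw [hPFH]
      rw [PowerSeries.coeff_mul, Finset.Nat.sum_antidiagonal_eq_sum_range_succ_mk,
        hB m hmn] at hconv
      have hsplit : ∑ k ∈ Finset.range (m + 1),
          (PowerSeries.coeff (R := ℚ) k) P * (PowerSeries.coeff (R := ℚ) (m - k)) F =
          (PowerSeries.coeff (R := ℚ) m) P - (q:ℚ) * (PowerSeries.coeff (R := ℚ) (m - 1)) P := by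
        have heach : ∀ k ∈ Finset.range (m + 1),
            (PowerSeries.coeff (R := ℚ) k) P * (PowerSeries.coeff (R := ℚ) (m - k)) F =
            (PowerSeries.coeff (R := ℚ) k) P *
              (if m - k = 0 then 1 else if m - k = 1 then -(q:ℚ) else 0) := by
          intro k hk
          rw [hA (m - k) (by omega)]
        rw [Finset.sum_congr rfl heach]
        rw [← Finset.sum_subset
          (show ({m - 1, m} : Finset ℕ) ⊆ Finset.range (m + 1) by
            intro x hx; simp at hx; rcases hx with rfl | rfl <;> simp <;> omega)
          (fun x hx hnx => by
            simp only [Finset.mem_insert, Finset.mem_singleton] at hnx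
            push_neg at hnx
            have hxm := Finset.mem_range.mp hx
            rw [if_neg (by omega), if_neg (by omega), mul_zero])]
        rw [Finset.sum_pair (by omega : m - 1 ≠ m)]
        rw [if_neg (by omega : ¬ m - (m - 1) = 0), if_pos (by omega : m - (m - 1) = 1),
          if_pos (by omega : m - m = 0)]
        ring
      rw [hsplit] at hconv
      -- coeff m P = q * coeff (m-1) P + b m
      rcases (by omega : m = 1 ∨ m = 2 ∨ 3 ≤ m) with rfl | rfl | h3
      · rw [if_neg (by omega), if_pos rfl]
        rw [if_neg (by omega), if_neg (by omega)] at hconv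
        rw [show (1:ℕ) - 1 = 0 from rfl, ih 0 (by omega) (by omega), if_pos rfl] at hconv
        linarith
      · rw [if_neg (by omega), if_neg (by omega)]
        rw [if_neg (by omega), if_pos rfl] at hconv
        rw [show (2:ℕ) - 1 = 1 from rfl, ih 1 (by omega) (by omega),
          if_neg (by omega), if_pos rfl] at hconv
        have : (PowerSeries.coeff (R := ℚ) 2) P = (q:ℚ) * (q:ℚ) - (q:ℚ) := by linarith
        rw [this]
        norm_num
        ring_nf
      · rw [if_neg (by omega), if_neg (by omega)]
        rw [if_neg (by omega), if_neg (by omega)] at hconv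
        rw [ih (m - 1) (by omega) (by omega), if_neg (by omega), if_neg (by omega)] at hconv
        have hco : (PowerSeries.coeff (R := ℚ) m) P =
            (q:ℚ) * ((q:ℚ) ^ (m - 1) - (q:ℚ) ^ (m - 1 - 1)) := by linarith
        rw [hco]
        have e1 : (q:ℚ) * (q:ℚ) ^ (m - 1) = (q:ℚ) ^ m := by
          rw [← pow_succ', (by omega : m - 1 + 1 = m)]
        have e2 : (q:ℚ) * (q:ℚ) ^ (m - 1 - 1) = (q:ℚ) ^ (m - 1) := by
          rw [← pow_succ', (by omega : m - 1 - 1 + 1 = m - 1)]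
        rw [mul_sub, e1, e2]
  -- conclude
  have := hC n le_rfl
  rw [if_neg (by omega), if_neg (by omega)] at this
  rw [this]
  have e1 : (q:ℚ) ^ n = (q:ℚ) * (q:ℚ) ^ (n - 1) := by
    rw [← pow_succ', (by omega : n - 1 + 1 = n)]
  rw [Nat.cast_mul, Nat.cast_sub hq, Nat.cast_pow, e1]
  push_cast
  ring
end
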